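/- arXiv:2601.07517 — 17 statements merged into one kernel-verified Lean document; each statement's English description precedes it below -/
import Mathlib

section
/- For a closed convex cone K in a normed vector space X and any point x ∈ X, the distance from x to K equals the supremum of −x*(x) over all continuous linear functionals x* in the positive polar cone K⁺ with ‖x*‖ ≤ 1. -/
open Pointwise

/-- For a closed convex cone `K` in a normed space and any `x`,
`d(x,K) = sup { -f x | f ∈ K⁺, ‖f‖ ≤ 1 }`. -/
theorem dist_to_cone_eq_sSup
    {X : Type*} [NormedAddCommGroup X] [NormedSpace ℝ X]
    (K : Set X) (hKcl : IsClosed K) (hKconv : Convex ℝ K)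
    (hK0 : (0 : X) ∈ K)
    (hKcone : ∀ t : ℝ, 0 ≤ t → ∀ y ∈ K, t • y ∈ K)
    (x : X) :
    Metric.infDist x K =
      sSup {r : ℝ | ∃ f : X →L[ℝ] ℝ, (∀ k ∈ K, 0 ≤ f k) ∧ ‖f‖ ≤ 1 ∧ r = -f x} := by
  set S : Set ℝ := {r : ℝ | ∃ f : X →L[ℝ] ℝ, (∀ k ∈ K, 0 ≤ f k) ∧ ‖f‖ ≤ 1 ∧ r = -f x}
    with hS
  have hKne : K.Nonempty := ⟨0, hK0⟩
  have hSne : S.Nonempty := ⟨0, 0, fun k _ => le_refl 0, by simp, by simp⟩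
  -- every element of S is ≤ infDist
  have hub : ∀ r ∈ S, r ≤ Metric.infDist x K := by
    rintro r ⟨f, hfK, hfn, rfl⟩
    rw [Metric.infDist_eq_iInf]
    haveI : Nonempty K := hKne.to_subtype
    refine le_ciInf fun k => ?_
    have h1 : -f x ≤ f ((k : X) - x) := by
      have hk0 := hfK k k.2
      have hsub := f.map_sub (k : X) x
      linarith
    have h2 : f ((k : X) - x) ≤ ‖f‖ * ‖(k : X) - x‖ := le_trans (le_abs_self _)
      (by simpa using f.le_opNorm ((k : X) - x))
    have h3 : ‖f‖ * ‖(k : X) - x‖ ≤ ‖(k : X) - x‖ := by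
      have := norm_nonneg ((k : X) - x)
      nlinarith
    calc -f x ≤ f ((k : X) - x) := h1
      _ ≤ ‖(k : X) - x‖ := h2.trans h3
      _ = dist x k := by rw [dist_eq_norm, norm_sub_rev]
  have hbdd : BddAbove S := ⟨Metric.infDist x K, hub⟩
  refine le_antisymm ?_ (csSup_le hSne hub)
  by_cases hx : x ∈ K
  · have : Metric.infDist x K = 0 := Metric.infDist_zero_of_mem hx
    rw [this]
    exact le_csSup hbdd ⟨0, fun k _ => le_refl 0, by simp, by simp⟩
  · set d := Metric.infDist x K with hd
    have hdpos : 0 < d := (hKcl.notMem_iff_infDist_pos hKne).mp hx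
    have hdisj : Disjoint (Metric.ball x d) K := by
      rw [Set.disjoint_left]
      intro y hy hyK
      exact absurd (Metric.infDist_le_dist_of_mem hyK)
        (by rw [dist_comm]; exact not_le.mpr (Metric.mem_ball.mp hy))
    obtain ⟨f, u, hfball, hfK⟩ :=
      geometric_hahn_banach_open (convex_ball x d) Metric.isOpen_ball hKconv hdisj
    have hu0 : u ≤ 0 := by simpa using hfK 0 hK0
    have hfKpos : ∀ k ∈ K, 0 ≤ f k := by
      intro k hk
      by_contra hneg
      push_neg at hneg
      have ht : (0:ℝ) ≤ (u - 1) / f k := by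
        rw [le_div_iff_of_neg hneg]
        linarith
      have := hfK _ (hKcone _ ht k hk)
      rw [map_smul] at this
      have : u ≤ u - 1 := by
        rw [smul_eq_mul] at this
        rw [div_mul_cancel₀ (u - 1) (ne_of_lt hneg)] at this
        exact this
      linarith
    have hfx : f x < u := hfball x (Metric.mem_ball_self hdpos)
    have hfne : f ≠ 0 := by
      intro h
      rw [h] at hfx
      simp at hfx
      linarith
    have hfnorm : 0 < ‖f‖ := norm_pos_iff.mpr hfne
    set g : X →L[ℝ] ℝ := ‖f‖⁻¹ • f with hg
    have hgnorm : ‖g‖ = 1 := by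
      rw [hg, norm_smul (α := ℝ) (‖f‖⁻¹) f]
      simp [abs_of_pos hfnorm, inv_mul_cancel₀ (ne_of_gt hfnorm)]
    have hgK : ∀ k ∈ K, 0 ≤ g k := by
      intro k hk
      simp only [hg, ContinuousLinearMap.smul_apply, smul_eq_mul]
      exact mul_nonneg (inv_nonneg.mpr (norm_nonneg f)) (hfKpos k hk)
    have hgball : ∀ y ∈ Metric.ball x d, g y ≤ 0 := by
      intro y hy
      simp only [hg, ContinuousLinearMap.smul_apply, smul_eq_mul]
      exact mul_nonpos_of_nonneg_of_nonpos (inv_nonneg.mpr (norm_nonneg f))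
        (le_of_lt (lt_of_lt_of_le (hfball y hy) hu0))
    -- key: d ≤ -g x
    have hkey : d ≤ -g x := by
      refine le_of_forall_pos_le_add fun ε hε => ?_
      have hr : 1 - ε / d < ‖g‖ := by
        rw [hgnorm]; have := div_pos hε hdpos; linarith
      obtain ⟨v, hv1, hv2⟩ := g.exists_lt_apply_of_lt_opNorm hr
      -- replace v by ±v so that g v > 1 - ε/d
      obtain ⟨w, hw1, hw2⟩ : ∃ w : X, ‖w‖ < 1 ∧ 1 - ε / d < g w := by
        rcases le_or_gt 0 (g v) with h | h
        · exact ⟨v, hv1, by rwa [Real.norm_eq_abs, abs_of_nonneg h] at hv2⟩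
        · exact ⟨-v, by simpa using hv1, by
            rw [map_neg]; rwa [Real.norm_eq_abs, abs_of_neg h] at hv2⟩
      have hmem : x + d • w ∈ Metric.ball x d := by
        rw [Metric.mem_ball, dist_eq_norm]
        simp only [add_sub_cancel_left, norm_smul, Real.norm_eq_abs,
          abs_of_pos hdpos]
        calc d * ‖w‖ < d * 1 := by exact mul_lt_mul_of_pos_left hw1 hdpos
          _ = d := mul_one d
      have := hgball _ hmem
      rw [map_add, map_smul, smul_eq_mul] at this
      have hdw : d * (1 - ε / d) < d * g w := mul_lt_mul_of_pos_left hw2 hdpos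
      rw [mul_sub, mul_one, mul_div_cancel₀ _ (ne_of_gt hdpos)] at hdw
      linarith
    calc d ≤ -g x := hkey
      _ ≤ sSup S := le_csSup hbdd ⟨g, hgK, le_of_eq hgnorm, rfl⟩
end

section
/- Let A be a nonempty subset of a normed vector space X and K a closed convex cone. The following are equivalent: (i) there exists ℓ ≥ 0 such that A ⊂ ℓ·D_X + K, where D_X is the closed unit ball; (ii) there exists ρ ∈ ℝ such that inf x*(A) ≥ ρ for every x* ∈ K⁺ with ‖x*‖ ≤ 1. Moreover, either of these implies: (iii) for every x* ∈ K⁺, the set x*(A) is bounded from below. -/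
/-!
(i) ⇒ (ii), (iii): a functional nonnegative on `K` is at least `-ℓ‖f‖` on `closedBall 0 ℓ + K`.
(ii) ⇒ (i): if `a ∉ closedBall 0 ℓ + K`, separate `a` from the open convex set `ball 0 ℓ + K`.
The separating functional is bounded above on the cone `K`, hence nonpositive there, and its
bound on the ball controls its norm; suitably rescaled and negated it becomes a unit-ball element
of `K⁺` that is `≤ -r` at `a`, which contradicts (ii) once `ℓ > r > -ρ`.
-/

open Pointwise Metric

theorem LinearMap.nonpos_of_forall_lt_of_smul_mem {E : Type*} [AddCommGroup E] [Module ℝ E]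
    {K : Set E} (hKcone : ∀ t : ℝ, 0 ≤ t → ∀ y ∈ K, t • y ∈ K) {f : E →ₗ[ℝ] ℝ} {c : ℝ}
    (hf : ∀ k ∈ K, f k < c) {k : E} (hk : k ∈ K) : f k ≤ 0 := by
  by_contra! hpos
  have := hf _ (hKcone (|c| / f k) (by positivity) k hk)
  rw [map_smul, smul_eq_mul, div_mul_cancel₀ _ hpos.ne'] at this
  linarith [le_abs_self c]

section

variable {X : Type*} [NormedAddCommGroup X] [NormedSpace ℝ X] {K : Set X}

theorem ContinuousLinearMap.neg_mul_opNorm_le_of_mem_closedBall_add {f : X →L[ℝ] ℝ}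
    (hfK : ∀ k ∈ K, 0 ≤ f k) {ℓ : ℝ} {a : X} (ha : a ∈ closedBall (0 : X) ℓ + K) :
    -(ℓ * ‖f‖) ≤ f a := by
  obtain ⟨x, hx, k, hk, rfl⟩ := ha
  have hfx : |f x| ≤ ℓ * ‖f‖ :=
    calc |f x| = ‖f x‖ := (Real.norm_eq_abs _).symm
      _ ≤ ‖f‖ * ‖x‖ := f.le_opNorm x
      _ ≤ ‖f‖ * ℓ := by gcongr; simpa using hx
      _ = ℓ * ‖f‖ := mul_comm _ _
  rw [map_add]
  linarith [neg_abs_le (f x), hfK k hk]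

theorem exists_dual_cone_unit_apply_eq_neg_of_notMem_closedBall_add (hKconv : Convex ℝ K)
    (hK0 : (0 : X) ∈ K) (hKcone : ∀ t : ℝ, 0 ≤ t → ∀ y ∈ K, t • y ∈ K) {r ℓ : ℝ} (hr : 0 < r)
    (hrℓ : r < ℓ) {a : X} (ha : a ∉ closedBall (0 : X) ℓ + K) :
    ∃ g : X →L[ℝ] ℝ, (∀ k ∈ K, 0 ≤ g k) ∧ ‖g‖ ≤ 1 ∧ g a = -r := by
  have ha' : a ∉ ball (0 : X) ℓ + K := fun h =>
    ha (Set.add_subset_add_right ball_subset_closedBall h)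
  obtain ⟨f, hf⟩ := geometric_hahn_banach_open_point ((convex_ball 0 ℓ).add hKconv)
    isOpen_ball.add_right ha'
  have hball : ∀ x ∈ ball (0 : X) ℓ, f x < f a := fun x hx => hf x ⟨x, hx, 0, hK0, add_zero x⟩
  have hfK : ∀ k ∈ K, f k ≤ 0 := fun k hk =>
    LinearMap.nonpos_of_forall_lt_of_smul_mem hKcone (f := f.toLinearMap)
      (fun k hk => hf k ⟨0, mem_ball_self (hr.trans hrℓ), k, hk, zero_add k⟩) hk
  have hfa : 0 < f a := by simpa using hball 0 (mem_ball_self (hr.trans hrℓ))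
  have hnorm : ‖f‖ ≤ f a / r := by
    refine f.opNorm_bound_of_ball_bound hr _ fun z hz => ?_
    have hz' : ∀ w ∈ closedBall (0 : X) r, w ∈ ball (0 : X) ℓ := fun w hw =>
      closedBall_subset_ball hrℓ hw
    have h₁ := hball z (hz' z hz)
    have h₂ := hball (-z) (hz' (-z) (by simpa using hz))
    rw [map_neg] at h₂
    rw [Real.norm_eq_abs, abs_le]
    constructor <;> linarith
  refine ⟨(r / f a) • -f, fun k hk => ?_, ?_, ?_⟩
  · simpa using mul_nonneg (div_pos hr hfa).le (neg_nonneg.2 (hfK k hk))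
  · calc ‖(r / f a) • -f‖ = r / f a * ‖f‖ := by
          rw [norm_smul, norm_neg, Real.norm_of_nonneg (div_pos hr hfa).le]
      _ ≤ r / f a * (f a / r) := by gcongr
      _ = 1 := by field_simp
  · simp [hfa.ne']

end

theorem cone_bounded_tfae_general
    {X : Type*} [NormedAddCommGroup X] [NormedSpace ℝ X]
    (K : Set X) (hKconv : Convex ℝ K)
    (hK0 : (0 : X) ∈ K)
    (hKcone : ∀ t : ℝ, 0 ≤ t → ∀ y ∈ K, t • y ∈ K)
    (A : Set X) :
    ((∃ ℓ : ℝ, 0 ≤ ℓ ∧ A ⊆ Metric.closedBall (0 : X) ℓ + K) ↔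
      (∃ ρ : ℝ, ∀ f : X →L[ℝ] ℝ, (∀ k ∈ K, 0 ≤ f k) → ‖f‖ ≤ 1 → ∀ a ∈ A, ρ ≤ f a)) ∧
    ((∃ ℓ : ℝ, 0 ≤ ℓ ∧ A ⊆ Metric.closedBall (0 : X) ℓ + K) →
      (∀ f : X →L[ℝ] ℝ, (∀ k ∈ K, 0 ≤ f k) → BddBelow (f '' A))) := by
  refine ⟨⟨?_, ?_⟩, ?_⟩
  · rintro ⟨ℓ, hℓ, hA⟩
    refine ⟨-ℓ, fun f hfK hf a ha => ?_⟩
    have := f.neg_mul_opNorm_le_of_mem_closedBall_add hfK (hA ha)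
    nlinarith
  · rintro ⟨ρ, hρ⟩
    refine ⟨|ρ| + 2, by positivity, fun a ha => ?_⟩
    by_contra hna
    obtain ⟨g, hgK, hg, hga⟩ := exists_dual_cone_unit_apply_eq_neg_of_notMem_closedBall_add
      hKconv hK0 hKcone (r := |ρ| + 1) (by positivity) (by linarith) hna
    linarith [hρ g hgK hg a ha, neg_abs_le ρ]
  · rintro ⟨ℓ, -, hA⟩ f hfK
    exact ⟨-(ℓ * ‖f‖), Set.forall_mem_image.2 fun a ha =>
      f.neg_mul_opNorm_le_of_mem_closedBall_add hfK (hA ha)⟩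

/-- (i) K-boundedness ↔ (ii) uniform lower bound over unit-ball positive functionals,
and either implies (iii) dual K-boundedness. -/
theorem cone_bounded_tfae
    {X : Type*} [NormedAddCommGroup X] [NormedSpace ℝ X]
    (K : Set X) (hKcl : IsClosed K) (hKconv : Convex ℝ K)
    (hK0 : (0 : X) ∈ K)
    (hKcone : ∀ t : ℝ, 0 ≤ t → ∀ y ∈ K, t • y ∈ K)
    (A : Set X) (hA : A.Nonempty) :
    ((∃ ℓ : ℝ, 0 ≤ ℓ ∧ A ⊆ Metric.closedBall (0 : X) ℓ + K) ↔
      (∃ ρ : ℝ, ∀ f : X →L[ℝ] ℝ, (∀ k ∈ K, 0 ≤ f k) → ‖f‖ ≤ 1 → ∀ a ∈ A, ρ ≤ f a)) ∧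
    ((∃ ℓ : ℝ, 0 ≤ ℓ ∧ A ⊆ Metric.closedBall (0 : X) ℓ + K) →
      (∀ f : X →L[ℝ] ℝ, (∀ k ∈ K, 0 ≤ f k) → BddBelow (f '' A))) :=
  cone_bounded_tfae_general K hKconv hK0 hKcone A
end

section
/- If ρ = d(x,K) > 0 for a point x in a normed space and K a closed convex cone, then for every ε ∈ (0,ρ) there exists a nonzero x* ∈ K⁺ with ‖x*‖ = 1 such that −x*(x) ≥ ρ − ε. -/
/-! The open ball `B(x, ρ)` misses `K`, so Hahn–Banach gives a functional `f` and a level `u`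
with `f < u` on the ball and `u ≤ f` on `K`. As `K` is a cone containing `0`, this forces
`f ≥ 0` on `K` and `u ≤ 0`; as the supremum of `f` over the ball is `f x + ρ‖f‖`, it gives
`ρ‖f‖ ≤ -f x`. Normalizing `f` yields the functional. -/

theorem LinearMap.nonneg_on_cone_of_bddBelow {𝕜 E : Type*} [Field 𝕜] [LinearOrder 𝕜]
    [IsStrictOrderedRing 𝕜] [AddCommGroup E] [Module 𝕜 E] (f : E →ₗ[𝕜] 𝕜)
    {K : Set E} (hK : ∀ t : 𝕜, 0 ≤ t → ∀ y ∈ K, t • y ∈ K) {u : 𝕜}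
    (hu : ∀ y ∈ K, u ≤ f y) : ∀ y ∈ K, 0 ≤ f y := by
  intro y hy
  by_contra! hy_neg
  -- `f` takes the value `-(|u| + 1) < u` at a nonnegative multiple of `y`
  have ht : 0 ≤ -(|u| + 1) / f y :=
    div_nonneg_of_nonpos (by linarith [abs_nonneg u]) hy_neg.le
  have := hu _ (hK _ ht y hy)
  rw [map_smul, smul_eq_mul, div_mul_cancel₀ _ hy_neg.ne] at this
  linarith [neg_abs_le u]

theorem ContinuousLinearMap.mul_norm_le_of_lt_on_ball {E : Type*} [NormedAddCommGroup E]
    [NormedSpace ℝ E] (f : E →L[ℝ] ℝ) {x : E} {r u : ℝ} (hr : 0 < r)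
    (hf : ∀ y ∈ Metric.ball x r, f y < u) : r * ‖f‖ ≤ u - f x := by
  by_contra! h
  obtain ⟨v, hv, hfv⟩ := f.exists_lt_apply_of_lt_opNorm (r := (u - f x) / r)
    (by rwa [div_lt_iff₀' hr])
  obtain ⟨w, hw, hfw⟩ : ∃ w : E, ‖w‖ = ‖v‖ ∧ f w = |f v| := by
    rcases abs_cases (f v) with ⟨habs, -⟩ | ⟨habs, -⟩
    · exact ⟨v, rfl, habs.symm⟩
    · exact ⟨-v, norm_neg v, by rw [map_neg, habs]⟩
  have hmem : x + r • w ∈ Metric.ball x r := by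
    rw [Metric.mem_ball, dist_eq_norm, add_sub_cancel_left, norm_smul,
      Real.norm_of_nonneg hr.le, hw]
    exact mul_lt_of_lt_one_right hr hv
  have := hf _ hmem
  rw [map_add, map_smul, smul_eq_mul, hfw] at this
  rw [Real.norm_eq_abs, div_lt_iff₀ hr] at hfv
  linarith

theorem exists_separating_functional_general
    {X : Type*} [NormedAddCommGroup X] [NormedSpace ℝ X]
    (K : Set X) (hKconv : Convex ℝ K)
    (hK0 : (0 : X) ∈ K)
    (hKcone : ∀ t : ℝ, 0 ≤ t → ∀ y ∈ K, t • y ∈ K)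
    (x : X) (ρ : ℝ) (hρ : ρ = Metric.infDist x K) (hρpos : 0 < ρ)
    (ε : ℝ) (hε0 : 0 < ε) :
    ∃ f : X →L[ℝ] ℝ, f ≠ 0 ∧ (∀ k ∈ K, 0 ≤ f k) ∧ ‖f‖ = 1 ∧ ρ - ε ≤ -f x := by
  obtain ⟨f, u, hf_ball, hf_K⟩ := geometric_hahn_banach_open (convex_ball x ρ)
    Metric.isOpen_ball hKconv (hρ ▸ Metric.disjoint_ball_infDist)
  have hu : u ≤ 0 := by simpa using hf_K 0 hK0
  have hbound : ρ * ‖f‖ ≤ -f x := by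
    linarith [f.mul_norm_le_of_lt_on_ball hρpos hf_ball]
  have hf_ne : f ≠ 0 := by
    rintro rfl
    simpa using (hf_ball x (Metric.mem_ball_self hρpos)).trans_le hu
  have hf_pos : 0 < ‖f‖ := norm_pos_iff.2 hf_ne
  have hnorm : ‖‖f‖⁻¹ • f‖ = 1 := norm_smul_inv_norm (𝕜 := ℝ) hf_ne
  have hf_nonneg : ∀ k ∈ K, 0 ≤ f k := f.toLinearMap.nonneg_on_cone_of_bddBelow hKcone hf_K
  refine ⟨‖f‖⁻¹ • f, norm_ne_zero_iff.1 (by rw [hnorm]; exact one_ne_zero),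
    fun k hk => mul_nonneg (inv_nonneg.2 hf_pos.le) (hf_nonneg k hk), hnorm, ?_⟩
  calc ρ - ε ≤ ρ := by linarith
    _ ≤ -(‖f‖⁻¹ • f) x := by
      rw [smul_apply, smul_eq_mul, ← mul_neg, le_inv_mul_iff₀ hf_pos]
      linarith

/-- Separation step: if `d(x,K) = ρ > 0` then for every `ε ∈ (0,ρ)` there is a
norm-one positive functional `f ∈ K⁺` with `-f x ≥ ρ - ε`. -/
theorem exists_separating_functional
    {X : Type*} [NormedAddCommGroup X] [NormedSpace ℝ X]
    (K : Set X) (hKcl : IsClosed K) (hKconv : Convex ℝ K)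
    (hK0 : (0 : X) ∈ K)
    (hKcone : ∀ t : ℝ, 0 ≤ t → ∀ y ∈ K, t • y ∈ K)
    (x : X) (ρ : ℝ) (hρ : ρ = Metric.infDist x K) (hρpos : 0 < ρ)
    (ε : ℝ) (hε0 : 0 < ε) (hερ : ε < ρ) :
    ∃ f : X →L[ℝ] ℝ, f ≠ 0 ∧ (∀ k ∈ K, 0 ≤ f k) ∧ ‖f‖ = 1 ∧ ρ - ε ≤ -f x :=
  exists_separating_functional_general K hKconv hK0 hKcone x ρ hρ hρpos ε hε0
end

section
/- Let X be a finite-dimensional normed vector space and K a finitely generated closed convex cone. If A ⊂ X is a nonempty set such that x*(A) is bounded from below for every x* ∈ K⁺, then there exists ℓ ≥ 0 with A ⊂ ℓ·D_X + K (i.e., dual K-boundedness implies K-boundedness). -/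
/-!
The functionals of the dual cone `K⁺ = {g | ∀ i, 0 ≤ g (v i)}` of norm at most one lie in a compact
polytope `S ⊆ K⁺`, obtained by intersecting `K⁺` with a box in the coordinates of a basis. A polytope
is the convex hull of its finitely many extreme points, and at each of them `A` is bounded below by
hypothesis; the minimum of these finitely many bounds gives `-ℓ ‖g‖ ≤ g a` for all `g ∈ K⁺` and
`a ∈ A`, which replaces Hoffman's lemma. If some `a ∈ A` lay outside the closed convex set
`closedBall 0 ℓ + K`, a functional `f` separating them would satisfy `-f ∈ K⁺` and `ℓ ‖f‖ < f a`,
contradicting that bound.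
-/

open Pointwise Set Filter Topology

section Polyhedron

variable {Y ι : Type*} [AddCommGroup Y] [Module ℝ Y] (L : ι → Y →ₗ[ℝ] ℝ) (b : ι → ℝ)

/-- If extreme points `x ≠ y` had the same active constraints, then for small `t > 0` both
`x ± t • (x - y)` would satisfy all constraints, and `x` would be their midpoint. -/
theorem injOn_activeSet_extremePoints [Finite ι] :
    InjOn (fun y => {i | L i y = b i}) ({y | ∀ i, b i ≤ L i y}.extremePoints ℝ) := by
  intro x hx y _ hxy
  by_contra hne
  have hev : ∀ i, ∀ᶠ t in 𝓝 (0 : ℝ),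
      b i ≤ L i x + t * L i (x - y) ∧ b i ≤ L i x + t * -L i (x - y) := by
    intro i
    rcases (hx.1 i).eq_or_lt with hi | hi
    · have hiy : L i y = b i := (Set.ext_iff.1 hxy i).1 hi.symm
      have hd : L i (x - y) = 0 := by rw [map_sub, hiy, ← hi, sub_self]
      simp [hd, ← hi]
    · have hsmall : ∀ s : ℝ, ∀ᶠ t in 𝓝 (0 : ℝ), b i ≤ L i x + t * s := fun s => by
        have : Tendsto (fun t : ℝ => L i x + t * s) (𝓝 0) (𝓝 (L i x)) :=
          (continuous_const.add (continuous_id.mul continuous_const)).tendsto' _ _ (by simp)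
        exact (this.eventually (lt_mem_nhds hi)).mono fun _ => le_of_lt
      exact (hsmall _).and (hsmall _)
  obtain ⟨t, ht, htpos⟩ :=
    (((eventually_all.2 hev).filter_mono nhdsWithin_le_nhds).and
      (self_mem_nhdsWithin (s := Ioi (0 : ℝ)))).exists
  have hmem : ∀ s : ℝ, (∀ i, b i ≤ L i x + s * L i (x - y)) →
      x + s • (x - y) ∈ {y | ∀ i, b i ≤ L i y} := fun s hs i => by
    simpa only [map_add, map_smul, smul_eq_mul] using hs i
  have hseg : x ∈ openSegment ℝ (x + t • (x - y)) (x + (-t) • (x - y)) :=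
    ⟨1 / 2, 1 / 2, by norm_num, by norm_num, by norm_num, by module⟩
  have hfix : x + t • (x - y) = x :=
    hx.2 (hmem t fun i => (ht i).1) (hmem (-t) fun i => by rw [neg_mul_comm]; exact (ht i).2) hseg
  have : t • (x - y) = 0 := by simpa using hfix
  exact hne (sub_eq_zero.1 ((smul_eq_zero.1 this).resolve_left (ne_of_gt htpos)))

theorem finite_extremePoints_setOf_forall_le [Finite ι] :
    ({y | ∀ i, b i ≤ L i y}.extremePoints ℝ).Finite :=
  Finite.of_finite_image (toFinite _) (injOn_activeSet_extremePoints L b)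

theorem convex_setOf_forall_le : Convex ℝ {y | ∀ i, b i ≤ L i y} := by
  simpa only [ofPred_forall] using convex_iInter fun i => convex_halfSpace_ge (L i).isLinear (b i)

end Polyhedron

theorem forall_nonneg_apply_iff {X F ι : Type*} [AddCommGroup X] [Module ℝ X] [Fintype ι]
    [FunLike F X ℝ] [LinearMapClass F ℝ X ℝ] {v : ι → X} {K : Set X}
    (hK : K = {x | ∃ c : ι → ℝ, (∀ i, 0 ≤ c i) ∧ x = ∑ i, c i • v i}) (g : F) :
    (∀ k ∈ K, 0 ≤ g k) ↔ ∀ i, 0 ≤ g (v i) := by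
  classical
  subst hK
  constructor
  · intro h i
    refine h _ ⟨Pi.single i 1, fun j => ?_, by simp [Pi.single_apply, ite_smul]⟩
    rw [Pi.single_apply]
    split_ifs <;> norm_num
  · rintro h _ ⟨c, hc, rfl⟩
    simp only [map_sum, map_smul, smul_eq_mul]
    exact Finset.sum_nonneg fun i _ => mul_nonneg (hc i) (h i)

theorem convexHull_extremePoints_eq_of_finite {E : Type*} [AddCommGroup E] [Module ℝ E]
    [TopologicalSpace E] [T2Space E] [IsTopologicalAddGroup E] [ContinuousSMul ℝ E]
    [LocallyConvexSpace ℝ E] {S : Set E} (hSc : IsCompact S) (hSconv : Convex ℝ S)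
    (hE : (S.extremePoints ℝ).Finite) : convexHull ℝ (S.extremePoints ℝ) = S := by
  rw [← (hE.isClosed_convexHull (𝕜 := ℝ)).closure_eq, closure_convexHull_extremePoints hSc hSconv]

theorem exists_forall_le_apply_of_finite_extremePoints {X : Type*} [NormedAddCommGroup X]
    [NormedSpace ℝ X] {S : Set (X →L[ℝ] ℝ)} (hSc : IsCompact S) (hSconv : Convex ℝ S)
    (hE : (S.extremePoints ℝ).Finite) {A : Set X}
    (hA : ∀ g ∈ S.extremePoints ℝ, BddBelow (g '' A)) :
    ∃ β, ∀ g ∈ S, ∀ a ∈ A, β ≤ g a := by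
  obtain ⟨β, hβ⟩ := hE.bddBelow_biUnion.2 hA
  refine ⟨β, fun g hg a ha => ?_⟩
  rw [← convexHull_extremePoints_eq_of_finite hSc hSconv hE] at hg
  refine convexHull_min (fun h hh => hβ (mem_biUnion hh ⟨a, ha, rfl⟩)) ?_ hg
  exact convex_halfSpace_ge (ContinuousLinearMap.apply ℝ ℝ a).toLinearMap.isLinear β

theorem mem_closedBall_add_of_forall_neg_mul_norm_le {X : Type*} [NormedAddCommGroup X]
    [NormedSpace ℝ X] [ProperSpace X] {K : Set X} (hKcl : IsClosed K) (hKconv : Convex ℝ K)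
    (hK0 : (0 : X) ∈ K) (hKcone : ∀ t : ℝ, 0 ≤ t → ∀ y ∈ K, t • y ∈ K) {ℓ : ℝ} (hℓ : 0 ≤ ℓ)
    {a : X} (ha : ∀ g : X →L[ℝ] ℝ, (∀ k ∈ K, 0 ≤ g k) → -(ℓ * ‖g‖) ≤ g a) :
    a ∈ Metric.closedBall 0 ℓ + K := by
  by_contra hnot
  obtain ⟨f, u, hfu, hua⟩ := geometric_hahn_banach_closed_point
    ((convex_closedBall 0 ℓ).add hKconv) (hKcl.add_left_of_isCompact (isCompact_closedBall 0 ℓ))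
    hnot
  have hball : ∀ z ∈ Metric.closedBall (0 : X) ℓ, f z < u := fun z hz =>
    hfu _ ⟨z, hz, 0, hK0, add_zero z⟩
  have hu : 0 < u := by simpa using hball 0 (Metric.mem_closedBall_self hℓ)
  have hfK : ∀ k ∈ K, f k ≤ 0 := by
    intro k hk
    by_contra! hfk
    have := hfu _ ⟨0, Metric.mem_closedBall_self hℓ, _,
      hKcone (u / f k) (div_nonneg hu.le hfk.le) k hk, zero_add _⟩
    rw [map_smul, smul_eq_mul, div_mul_cancel₀ _ hfk.ne'] at this
    exact this.false
  have hnorm : ℓ * ‖f‖ ≤ u := by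
    rcases hℓ.eq_or_lt with rfl | hℓpos
    · simpa using hu.le
    have habs : ∀ z ∈ Metric.closedBall (0 : X) ℓ, ‖f z‖ ≤ u := fun z hz => by
      have hneg := hball (-z) (by simpa using hz)
      rw [map_neg] at hneg
      exact abs_le.2 ⟨by linarith, (hball z hz).le⟩
    have := ContinuousLinearMap.opNorm_bound_of_ball_bound hℓpos u f habs
    rwa [le_div_iff₀ hℓpos, mul_comm] at this
  have := ha (-f) fun k hk => by simpa using hfK k hk
  simp only [norm_neg, neg_apply, neg_le_neg_iff] at this
  linarith

theorem Module.Basis.isBounded_setOf_forall_abs_apply_le {X ι : Type*} [NormedAddCommGroup X]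
    [NormedSpace ℝ X] [Fintype ι] (e : Module.Basis ι ℝ X) (r : ι → ℝ) :
    Bornology.IsBounded {g : X →L[ℝ] ℝ | ∀ k, |g (e k)| ≤ r k} := by
  obtain ⟨C, -, hC⟩ := e.exists_opNorm_le (F := ℝ)
  refine (Metric.isBounded_closedBall (x := 0) (r := C * ∑ k, |r k|)).subset fun g hg => ?_
  rw [mem_closedBall_zero_iff]
  refine hC (by positivity) fun k => ?_
  calc ‖g (e k)‖ ≤ |r k| := (hg k).trans (le_abs_self _)
    _ ≤ ∑ k, |r k| := Finset.single_le_sum (fun k _ => abs_nonneg (r k)) (Finset.mem_univ k)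

theorem exists_forall_neg_mul_norm_le_apply {X ι : Type*} [NormedAddCommGroup X]
    [NormedSpace ℝ X] [FiniteDimensional ℝ X] [Finite ι] (v : ι → X) {A : Set X}
    (hA : ∀ g : X →L[ℝ] ℝ, (∀ i, 0 ≤ g (v i)) → BddBelow (g '' A)) :
    ∃ ℓ, 0 ≤ ℓ ∧ ∀ g : X →L[ℝ] ℝ, (∀ i, 0 ≤ g (v i)) → ∀ a ∈ A, -(ℓ * ‖g‖) ≤ g a := by
  set e := Module.finBasis ℝ X
  -- `S` is the dual cone cut by the box `|g (e k)| ≤ ‖e k‖`, written as a polyhedron: a compact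
  -- polytope containing every unit-norm functional of the dual cone.
  set p : ι ⊕ (Fin _ ⊕ Fin _) → X := Sum.elim v (Sum.elim e fun k => -e k)
  set c : ι ⊕ (Fin _ ⊕ Fin _) → ℝ := Sum.elim 0 (Sum.elim (fun k => -‖e k‖) (fun k => -‖e k‖))
  set L : ι ⊕ (Fin _ ⊕ Fin _) → (X →L[ℝ] ℝ) →L[ℝ] ℝ := fun i => ContinuousLinearMap.apply ℝ ℝ (p i)
  set S : Set (X →L[ℝ] ℝ) := {g | ∀ i, c i ≤ (L i : (X →L[ℝ] ℝ) →ₗ[ℝ] ℝ) g}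
  have hmem : ∀ g, g ∈ S ↔ (∀ i, 0 ≤ g (v i)) ∧ ∀ k, |g (e k)| ≤ ‖e k‖ := by
    intro g
    simp [S, L, p, c, Sum.forall, abs_le, neg_le, forall_and]
  have hSc : IsCompact S := by
    refine Metric.isCompact_of_isClosed_isBounded ?_
      ((e.isBounded_setOf_forall_abs_apply_le fun k => ‖e k‖).subset fun g hg => ((hmem g).1 hg).2)
    simp only [S, ofPred_forall]
    exact isClosed_iInter fun i => isClosed_le continuous_const (L i).continuous
  obtain ⟨β, hβ⟩ := exists_forall_le_apply_of_finite_extremePoints hSc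
    (convex_setOf_forall_le _ c) (finite_extremePoints_setOf_forall_le _ c)
    fun g hg => hA g ((hmem g).1 (extremePoints_subset hg)).1
  refine ⟨max (-β) 0, le_max_right _ _, fun g hg a ha => ?_⟩
  rcases eq_or_ne g 0 with rfl | hg0
  · simp
  have hunit : ‖‖g‖⁻¹ • g‖ = 1 := by
    rw [norm_smul, norm_inv, norm_norm, inv_mul_cancel₀ (norm_ne_zero_iff.2 hg0)]
  have hgS : ‖g‖⁻¹ • g ∈ S := by
    refine (hmem _).2 ⟨fun i => ?_, fun k => ?_⟩
    · simpa using mul_nonneg (inv_nonneg.2 (norm_nonneg g)) (hg i)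
    · exact ((‖g‖⁻¹ • g).le_opNorm (e k)).trans_eq (by rw [hunit, one_mul])
  have hβg : ‖g‖ * β ≤ g a := by
    have := hβ _ hgS a ha
    rwa [smul_apply, smul_eq_mul, le_inv_mul_iff₀ (norm_pos_iff.2 hg0)] at this
  nlinarith [le_max_left (-β) 0, norm_nonneg g]

theorem dually_bounded_implies_bounded_fin_dim_general
    {X : Type*} [NormedAddCommGroup X] [NormedSpace ℝ X] [FiniteDimensional ℝ X]
    (K : Set X) (hKcl : IsClosed K) (hKconv : Convex ℝ K)
    (hK0 : (0 : X) ∈ K)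
    (hKcone : ∀ t : ℝ, 0 ≤ t → ∀ y ∈ K, t • y ∈ K)
    (hgen : ∃ (n : ℕ) (v : Fin n → X),
      K = {x : X | ∃ c : Fin n → ℝ, (∀ i, 0 ≤ c i) ∧ x = ∑ i, c i • v i})
    (A : Set X)
    (hdb : ∀ f : X →L[ℝ] ℝ, (∀ k ∈ K, 0 ≤ f k) → BddBelow (f '' A)) :
    ∃ ℓ : ℝ, 0 ≤ ℓ ∧ A ⊆ Metric.closedBall (0 : X) ℓ + K := by
  obtain ⟨n, v, hKv⟩ := hgen
  obtain ⟨ℓ, hℓ, hbound⟩ := exists_forall_neg_mul_norm_le_apply v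
    fun g hg => hdb g ((forall_nonneg_apply_iff hKv g).2 hg)
  exact ⟨ℓ, hℓ, fun a ha => mem_closedBall_add_of_forall_neg_mul_norm_le hKcl hKconv hK0 hKcone
    hℓ fun g hg => hbound g ((forall_nonneg_apply_iff hKv g).1 hg) a ha⟩

/-- In finite dimension, for a finitely generated closed convex cone `K`,
dual K-boundedness implies K-boundedness. -/
theorem dually_bounded_implies_bounded_fin_dim
    {X : Type*} [NormedAddCommGroup X] [NormedSpace ℝ X] [FiniteDimensional ℝ X]
    (K : Set X) (hKcl : IsClosed K) (hKconv : Convex ℝ K)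
    (hK0 : (0 : X) ∈ K)
    (hKcone : ∀ t : ℝ, 0 ≤ t → ∀ y ∈ K, t • y ∈ K)
    (hgen : ∃ (n : ℕ) (v : Fin n → X),
      K = {x : X | ∃ c : Fin n → ℝ, (∀ i, 0 ≤ c i) ∧ x = ∑ i, c i • v i})
    (A : Set X) (hA : A.Nonempty)
    (hdb : ∀ f : X →L[ℝ] ℝ, (∀ k ∈ K, 0 ≤ f k) → BddBelow (f '' A)) :
    ∃ ℓ : ℝ, 0 ≤ ℓ ∧ A ⊆ Metric.closedBall (0 : X) ℓ + K :=
  dually_bounded_implies_bounded_fin_dim_general K hKcl hKconv hK0 hKcone hgen A hdb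
end

section
/- In the space c₀ with the supremum norm and the nonnegative cone K = (c₀)₊, the set A = {a^(k) ∣ k ≥ 1}, where a^(k) has coordinates k² for n ≤ k, −k at position k+1, and 0 otherwise, is dually K-bounded (for every x* ∈ ℓ¹₊ the set x*(A) is bounded below) but not K-bounded (there is no ℓ ≥ 0 with A ⊂ ℓ·D + K); indeed d(a^(k), K) = k for every k. -/
open Pointwise Filter

noncomputable section

/-- The element `a^(k) ∈ c₀`: value `k²` on coordinates `0,…,k-1`, `-k` at
coordinate `k`, and `0` afterwards. -/
def aSeq (k : ℕ) : ZeroAtInftyContinuousMap ℕ ℝ where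
  toFun := fun n => if n < k then (k : ℝ) ^ 2 else if n = k then -(k : ℝ) else 0
  continuous_toFun := continuous_of_discreteTopology
  zero_at_infty' := by
    rw [cocompact_eq_atTop (α := ℕ)]
    have h : ∀ᶠ n in atTop,
        (if n < k then (k : ℝ) ^ 2 else if n = k then -(k : ℝ) else 0) = 0 := by
      filter_upwards [eventually_ge_atTop (k + 1)] with n hn
      have h1 : ¬ n < k := by omega
      have h2 : n ≠ k := by omega
      simp [h1, h2]
    exact Tendsto.congr' (by filter_upwards [h] with n hn; exact hn.symm)
      tendsto_const_nhds

/-!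
A positive functional `f` on `c₀` takes on `a^(k) = k² 𝟙_{[0,k)} - k e_k` the value
`k² S k - k c k`, where `S k = f 𝟙_{[0,k)}` is nondecreasing and `0 ≤ c k = f e_k ≤ ‖f‖`.
Either `S` is eventually positive, and then the quadratic term dominates, or `S` vanishes
identically, and then so does `c`. On the other hand every `y ≥ 0` differs from `a^(k)` by at
least `k` in coordinate `k`, with equality for `y = k² 𝟙_{[0,k)}`, so `d(a^(k), K) = k` is
unbounded, whereas every point of `ℓ D + K` lies within `ℓ` of `K`.
-/

open Set Metric
open scoped ZeroAtInfty

lemma Metric.infDist_le_of_mem_closedBall_add {E : Type*} [SeminormedAddCommGroup E]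
    {K : Set E} {x : E} {ℓ : ℝ} (hx : x ∈ closedBall (0 : E) ℓ + K) : infDist x K ≤ ℓ := by
  obtain ⟨b, hb, y, hy, rfl⟩ := hx
  calc infDist (b + y) K ≤ dist (b + y) y := infDist_le_dist_of_mem hy
    _ = ‖b‖ := dist_add_self_left y b
    _ ≤ ℓ := mem_closedBall_zero_iff.mp hb

lemma bddBelow_range_sq_mul_sub_mul {S c : ℕ → ℝ} {C : ℝ} (hS : Monotone S)
    (hS_nonneg : ∀ k, 0 ≤ S k) (hcS : ∀ k, c k ≤ S (k + 1)) (hcC : ∀ k, c k ≤ C) :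
    BddBelow (range fun k : ℕ => (k : ℝ) ^ 2 * S k - k * c k) := by
  by_cases hpos : ∃ m, 0 < S m
  · obtain ⟨m, hm⟩ := hpos
    refine ⟨-(m * |C| + C ^ 2 / (4 * S m)), ?_⟩
    rintro _ ⟨k, rfl⟩
    have hC : c k ≤ |C| := (hcC k).trans (le_abs_self C)
    have hk : (0 : ℝ) ≤ k := k.cast_nonneg
    have hquot : 0 ≤ C ^ 2 / (4 * S m) := by positivity
    rcases lt_or_ge k m with hkm | hkm
    · have hkm_real : (k : ℝ) ≤ m := by exact_mod_cast hkm.le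
      nlinarith [hS_nonneg k, abs_nonneg C]
    · have hSk : S m ≤ S k := hS hkm
      -- completing the square: `k² s - k |C| ≥ -C² / (4 s)`
      have hsq : -(C ^ 2 / (4 * S m)) ≤ (k : ℝ) ^ 2 * S m - k * |C| := by
        rw [neg_le_iff_add_nonneg, ← sq_abs C]
        have : 0 ≤ (2 * k * S m - |C|) ^ 2 / (4 * S m) := by positivity
        convert this using 1
        field_simp
        ring
      nlinarith [abs_nonneg C]
  · push Not at hpos
    have hS0 : ∀ k, S k = 0 := fun k => le_antisymm (hpos k) (hS_nonneg k)
    refine ⟨0, ?_⟩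
    rintro _ ⟨k, rfl⟩
    have hc : c k ≤ 0 := hS0 (k + 1) ▸ hcS k
    simp only [hS0, mul_zero, zero_sub, neg_nonneg]
    exact mul_nonpos_of_nonneg_of_nonpos k.cast_nonneg hc

namespace ZeroAtInftyContinuousMap

lemma norm_apply_le {α β : Type*} [TopologicalSpace α] [SeminormedAddCommGroup β]
    (f : C₀(α, β)) (a : α) : ‖f a‖ ≤ ‖f‖ :=
  norm_toBCF_eq_norm (f := f) ▸ f.toBCF.norm_coe_le_norm a

lemma norm_le_of_forall_le {α β : Type*} [TopologicalSpace α] [SeminormedAddCommGroup β]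
    {f : C₀(α, β)} {C : ℝ} (hC : 0 ≤ C) (h : ∀ a, ‖f a‖ ≤ C) : ‖f‖ ≤ C :=
  norm_toBCF_eq_norm (f := f) ▸ (BoundedContinuousFunction.norm_le hC).mpr h

lemma neg_apply_le_infDist_nonneg {α : Type*} [TopologicalSpace α] (x : C₀(α, ℝ)) (a : α) :
    -x a ≤ infDist x {y : C₀(α, ℝ) | ∀ b, 0 ≤ y b} := by
  have h0 : (0 : C₀(α, ℝ)) ∈ {y : C₀(α, ℝ) | ∀ b, 0 ≤ y b} := fun _ => le_rfl
  refine (le_infDist ⟨0, h0⟩).mpr fun y hy => ?_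
  calc -x a ≤ y a - x a := by linarith [hy a]
    _ ≤ ‖(x - y) a‖ := by
        rw [coe_sub, Pi.sub_apply, Real.norm_eq_abs, abs_sub_comm]
        exact le_abs_self _
    _ ≤ dist x y := dist_eq_norm x y ▸ norm_apply_le (x - y) a

def ofEventuallyZero {β : Type*} [TopologicalSpace β] [Zero β] (g : ℕ → β)
    (hg : ∀ᶠ n in atTop, g n = 0) : C₀(ℕ, β) where
  toFun := g
  continuous_toFun := continuous_of_discreteTopology
  zero_at_infty' := by
    rw [cocompact_eq_atTop]
    exact tendsto_const_nhds.congr' (hg.mono fun _ h => h.symm)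

def indicatorIio (k : ℕ) : C₀(ℕ, ℝ) :=
  ofEventuallyZero (fun n => if n < k then 1 else 0)
    ((eventually_ge_atTop k).mono fun _ hn => if_neg hn.not_gt)

def single (k : ℕ) : C₀(ℕ, ℝ) :=
  ofEventuallyZero (fun n => if n = k then 1 else 0)
    ((eventually_gt_atTop k).mono fun _ hn => if_neg hn.ne')

@[simp] lemma indicatorIio_apply (k n : ℕ) : indicatorIio k n = if n < k then 1 else 0 := rfl

@[simp] lemma single_apply (k n : ℕ) : single k n = if n = k then 1 else 0 := rfl

lemma indicatorIio_succ (k : ℕ) : indicatorIio (k + 1) = indicatorIio k + single k := by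
  ext n
  simp only [indicatorIio_apply, single_apply, coe_add, Pi.add_apply]
  split_ifs <;> first | omega | norm_num

lemma norm_single_le (k : ℕ) : ‖single k‖ ≤ 1 :=
  norm_le_of_forall_le zero_le_one fun n => by rw [single_apply]; split_ifs <;> simp

end ZeroAtInftyContinuousMap

open ZeroAtInftyContinuousMap

@[simp] lemma aSeq_apply (k n : ℕ) :
    aSeq k n = if n < k then (k : ℝ) ^ 2 else if n = k then -(k : ℝ) else 0 := rfl

lemma aSeq_eq (k : ℕ) : aSeq k = (k : ℝ) ^ 2 • indicatorIio k - (k : ℝ) • single k := by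
  ext n
  simp only [aSeq_apply, indicatorIio_apply, single_apply, coe_sub, coe_smul, Pi.sub_apply,
    Pi.smul_apply, smul_eq_mul]
  split_ifs <;> first | omega | simp

lemma infDist_aSeq (k : ℕ) : infDist (aSeq k) {x : C₀(ℕ, ℝ) | ∀ n, 0 ≤ x n} = k := by
  refine le_antisymm ?_ (by simpa using neg_apply_le_infDist_nonneg (aSeq k) k)
  have hmem : (k : ℝ) ^ 2 • indicatorIio k ∈ {x : C₀(ℕ, ℝ) | ∀ n, 0 ≤ x n} := fun n => by
    simp only [coe_smul, Pi.smul_apply, indicatorIio_apply, smul_eq_mul]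
    split_ifs <;> positivity
  calc infDist (aSeq k) _ ≤ dist (aSeq k) ((k : ℝ) ^ 2 • indicatorIio k) :=
        infDist_le_dist_of_mem hmem
    _ = ‖(k : ℝ) • single k‖ := by rw [dist_eq_norm, aSeq_eq, sub_sub_cancel_left, norm_neg]
    _ ≤ k := by
        rw [norm_smul, Real.norm_natCast]
        exact mul_le_of_le_one_right k.cast_nonneg (norm_single_le k)

lemma bddBelow_range_apply_aSeq (f : C₀(ℕ, ℝ) →L[ℝ] ℝ)
    (hf : ∀ x : C₀(ℕ, ℝ), (∀ n, 0 ≤ x n) → 0 ≤ f x) :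
    BddBelow (range fun k => f (aSeq k)) := by
  have hS_succ (k : ℕ) : f (indicatorIio (k + 1)) = f (indicatorIio k) + f (single k) := by
    rw [indicatorIio_succ, map_add]
  have hc_nonneg (k : ℕ) : 0 ≤ f (single k) := hf _ fun n => by
    rw [single_apply]; split_ifs <;> norm_num
  have hS_nonneg (k : ℕ) : 0 ≤ f (indicatorIio k) := hf _ fun n => by
    rw [indicatorIio_apply]; split_ifs <;> norm_num
  have hc_le (k : ℕ) : f (single k) ≤ ‖f‖ :=
    (Real.le_norm_self _).trans ((f.le_opNorm_of_le (norm_single_le k)).trans_eq (mul_one _))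
  have hfa : (fun k => f (aSeq k)) =
      fun k : ℕ => (k : ℝ) ^ 2 * f (indicatorIio k) - k * f (single k) := by
    funext k
    rw [aSeq_eq, map_sub, map_smul, map_smul, smul_eq_mul, smul_eq_mul]
  rw [hfa]
  refine bddBelow_range_sq_mul_sub_mul (monotone_nat_of_le_succ fun k => ?_) hS_nonneg
    (fun k => ?_) hc_le
  · linarith [hS_succ k, hc_nonneg k]
  · linarith [hS_succ k, hS_nonneg k]

/-- In `c₀` with the nonnegative cone, the set `A = {a^(k) | k ≥ 1}` is dually
K-bounded but not K-bounded; indeed `d(a^(k),K) = k` for all `k ≥ 1`. -/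
theorem c0_example_dually_bounded_not_bounded :
    let K : Set (ZeroAtInftyContinuousMap ℕ ℝ) := {x | ∀ n : ℕ, 0 ≤ x n}
    let A : Set (ZeroAtInftyContinuousMap ℕ ℝ) := {x | ∃ k : ℕ, 1 ≤ k ∧ x = aSeq k}
    (∀ f : ZeroAtInftyContinuousMap ℕ ℝ →L[ℝ] ℝ,
        (∀ x ∈ K, 0 ≤ f x) → BddBelow (f '' A)) ∧
    (¬ ∃ ℓ : ℝ, 0 ≤ ℓ ∧ A ⊆ Metric.closedBall (0 : ZeroAtInftyContinuousMap ℕ ℝ) ℓ + K) ∧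
    (∀ k : ℕ, 1 ≤ k → Metric.infDist (aSeq k) K = k) := by
  intro K A
  refine ⟨fun f hf => ?_, ?_, fun k _ => infDist_aSeq k⟩
  · refine (bddBelow_range_apply_aSeq f hf).mono ?_
    rintro _ ⟨_, ⟨k, -, rfl⟩, rfl⟩
    exact ⟨k, rfl⟩
  · rintro ⟨ℓ, hℓ, hA⟩
    obtain ⟨k, hk⟩ := exists_nat_gt ℓ
    have hk_pos : 1 ≤ k := by exact_mod_cast hℓ.trans_lt hk
    have := infDist_le_of_mem_closedBall_add (hA ⟨k, hk_pos, rfl⟩)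
    rw [infDist_aSeq] at this
    linarith

end
end

section
/- A nonempty set A ⊂ X is dually K-bounded if and only if for every x* ∈ X* the excess e(x*(A), x*(K)) = sup_{a∈A} d(x*(a), x*(K)) is finite. -/
open Pointwise

/-- `A` is dually K-bounded iff for every continuous functional `f` the excess
`e(f(A), f(K)) = sup_{a∈A} d(f a, f(K))` is finite. -/
theorem dually_bounded_iff_excess_finite
    {X : Type*} [NormedAddCommGroup X] [NormedSpace ℝ X]
    (K : Set X) (hKcl : IsClosed K) (hKconv : Convex ℝ K)
    (hK0 : (0 : X) ∈ K)
    (hKcone : ∀ t : ℝ, 0 ≤ t → ∀ y ∈ K, t • y ∈ K)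
    (A : Set X) (hA : A.Nonempty) :
    (∀ f : X →L[ℝ] ℝ, (∀ k ∈ K, 0 ≤ f k) → BddBelow (f '' A)) ↔
    (∀ f : X →L[ℝ] ℝ, ∃ M : ℝ, ∀ a ∈ A, Metric.infDist (f a) (f '' K) ≤ M) := by
  have h0K : ∀ f : X →L[ℝ] ℝ, (0:ℝ) ∈ f '' K := fun f => ⟨0, hK0, by simp⟩
  constructor
  · intro h f
    -- helper: if f a has the same sign as some value of f on K, then f a ∈ f '' K
    have hmem : ∀ (c : X), c ∈ K → f c ≠ 0 → ∀ (a : X), 0 ≤ f a / f c → f a ∈ f '' K := by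
      intro c hc hc0 a ht
      exact ⟨(f a / f c) • c, hKcone _ ht _ hc, by
        simp [map_smul, div_mul_cancel₀ _ hc0]⟩
    by_cases hpos : ∃ k ∈ K, 0 < f k
    · obtain ⟨kp, hkpK, hkp⟩ := hpos
      by_cases hneg : ∃ k ∈ K, f k < 0
      · obtain ⟨kn, hknK, hkn⟩ := hneg
        refine ⟨0, fun a ha => ?_⟩
        rcases le_or_gt 0 (f a) with h0 | h0
        · have := hmem kp hkpK hkp.ne' a (div_nonneg h0 hkp.le)
          simp [Metric.infDist_zero_of_mem this]
        · have := hmem kn hknK hkn.ne a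
              (by rw [div_nonneg_iff]; exact Or.inr ⟨h0.le, hkn.le⟩)
          simp [Metric.infDist_zero_of_mem this]
      · -- f ≥ 0 on K
        push_neg at hneg
        obtain ⟨m, hm⟩ := h f hneg
        refine ⟨max (-m) 0, fun a ha => ?_⟩
        have hma : m ≤ f a := hm (Set.mem_image_of_mem f ha)
        rcases le_or_gt 0 (f a) with h0 | h0
        · have := hmem kp hkpK hkp.ne' a (div_nonneg h0 hkp.le)
          simp [Metric.infDist_zero_of_mem this]
        · calc Metric.infDist (f a) (f '' K) ≤ dist (f a) 0 :=
                Metric.infDist_le_dist_of_mem (h0K f)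
            _ = -f a := by rw [Real.dist_eq]; simp [abs_of_neg h0]
            _ ≤ -m := by linarith
            _ ≤ max (-m) 0 := le_max_left _ _
    · push_neg at hpos
      by_cases hneg : ∃ k ∈ K, f k < 0
      · obtain ⟨kn, hknK, hkn⟩ := hneg
        obtain ⟨m, hm⟩ := h (-f) (fun k hk => by
          simpa using hpos k hk)
        refine ⟨max (-m) 0, fun a ha => ?_⟩
        have hma : m ≤ -f a := by simpa using hm (Set.mem_image_of_mem (-f) ha)
        rcases le_or_gt (f a) 0 with h0 | h0
        · have := hmem kn hknK hkn.ne a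
              (by rw [div_nonneg_iff]; exact Or.inr ⟨h0, hkn.le⟩)
          simp [Metric.infDist_zero_of_mem this]
        · calc Metric.infDist (f a) (f '' K) ≤ dist (f a) 0 :=
                Metric.infDist_le_dist_of_mem (h0K f)
            _ = f a := by rw [Real.dist_eq]; simp [abs_of_pos h0]
            _ ≤ -m := by linarith
            _ ≤ max (-m) 0 := le_max_left _ _
      · push_neg at hneg
        obtain ⟨m, hm⟩ := h f hneg
        obtain ⟨m', hm'⟩ := h (-f) (fun k hk => by simpa using hpos k hk)
        refine ⟨max (-m) (-m'), fun a ha => ?_⟩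
        have hma : m ≤ f a := hm (Set.mem_image_of_mem f ha)
        have hma' : m' ≤ -f a := by simpa using hm' (Set.mem_image_of_mem (-f) ha)
        calc Metric.infDist (f a) (f '' K) ≤ dist (f a) 0 :=
              Metric.infDist_le_dist_of_mem (h0K f)
          _ = |f a| := by rw [Real.dist_eq]; simp
          _ ≤ max (-m) (-m') := by
              rcases le_or_gt 0 (f a) with h0 | h0
              · rw [abs_of_nonneg h0]; exact le_max_of_le_right (by linarith)
              · rw [abs_of_neg h0]; exact le_max_of_le_left (by linarith)
  · intro h f hf
    obtain ⟨M, hM⟩ := h f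
    refine ⟨-(M + 1), fun y hy => ?_⟩
    obtain ⟨a, ha, rfl⟩ := hy
    have hlt : Metric.infDist (f a) (f '' K) < M + 1 := lt_of_le_of_lt (hM a ha) (by linarith)
    have hne : (f '' K).Nonempty := ⟨0, h0K f⟩
    obtain ⟨y, hyK, hylt⟩ := (Metric.infDist_lt_iff hne).mp hlt
    obtain ⟨k, hk, rfl⟩ := hyK
    have h1 : 0 ≤ f k := hf k hk
    have h2 : |f a - f k| < M + 1 := by rwa [Real.dist_eq] at hylt
    have := abs_lt.mp h2
    linarith [this.1]
end

section
/- Let A be a nonempty dually K-bounded subset of X and let Ã = cl conv(A + K). Then the recession cone of Ã equals K. -/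
open Pointwise

/-- If `A` is dually K-bounded, then the recession cone of
`Ã = cl conv (A + K)` equals `K`. -/
theorem recession_cone_of_dually_bounded
    {X : Type*} [NormedAddCommGroup X] [NormedSpace ℝ X]
    (K : Set X) (hKcl : IsClosed K) (hKconv : Convex ℝ K)
    (hK0 : (0 : X) ∈ K)
    (hKcone : ∀ t : ℝ, 0 ≤ t → ∀ y ∈ K, t • y ∈ K)
    (A : Set X) (hA : A.Nonempty)
    (hdb : ∀ f : X →L[ℝ] ℝ, (∀ k ∈ K, 0 ≤ f k) → BddBelow (f '' A)) :
    {u : X | ∀ c ∈ closure (convexHull ℝ (A + K)), ∀ t : ℝ, 0 ≤ t →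
        c + t • u ∈ closure (convexHull ℝ (A + K))} = K := by
  -- K + K ⊆ K
  have hKK : ∀ k ∈ K, ∀ v ∈ K, k + v ∈ K := by
    intro k hk v hv
    have hmid : (1/2 : ℝ) • k + (1/2 : ℝ) • v ∈ K := hKconv hk hv (by norm_num) (by norm_num) (by norm_num)
    have := hKcone 2 (by norm_num) _ hmid
    have heq : (2:ℝ) • ((1/2 : ℝ) • k + (1/2 : ℝ) • v) = k + v := by
      rw [smul_add, smul_smul, smul_smul]; norm_num
    rwa [heq] at this
  -- the closed convex hull is stable under adding elements of K
  have hstab : ∀ v ∈ K, ∀ x ∈ closure (convexHull ℝ (A + K)),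
      x + v ∈ closure (convexHull ℝ (A + K)) := by
    intro v hv x hx
    have hconv : convexHull ℝ (A + K) ⊆ (fun z => z + v) ⁻¹' convexHull ℝ (A + K) := by
      apply convexHull_min
      · rintro z ⟨a, ha, k, hk, rfl⟩
        have : a + (k + v) ∈ A + K := ⟨a, ha, k + v, hKK k hk v hv, rfl⟩
        simpa [add_assoc] using subset_convexHull ℝ _ this
      · intro p hp q hq a b ha hb hab
        have hC : Convex ℝ (convexHull ℝ (A + K)) := convex_convexHull ℝ _
        have := hC hp hq ha hb hab
        simp only [Set.mem_preimage] at this ⊢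
        have hcombo : a • (p + v) + b • (q + v) = a • p + b • q + v := by
          rw [smul_add, smul_add, add_add_add_comm, Convex.combo_self hab v]
        rwa [hcombo] at this
    exact map_mem_closure (f := fun z => z + v)
      (continuous_id.add continuous_const) hx (fun z hz => hconv hz)
  apply Set.eq_of_subset_of_subset
  · -- rec cone ⊆ K
    intro u hu
    by_contra hunotK
    obtain ⟨f, c, hfK, hfu⟩ := geometric_hahn_banach_closed_point hKconv hKcl hunotK
    have hc0 : 0 < c := by simpa using hfK 0 hK0
    -- f ≤ 0 on K
    have hfle : ∀ k ∈ K, f k ≤ 0 := by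
      intro k hk
      by_contra hpos
      push_neg at hpos
      have ht : (0:ℝ) ≤ (c + 1) / f k := by positivity
      have h1 := hfK _ (hKcone _ ht k hk)
      have h2 : (c + 1) / f k * f k = c + 1 := div_mul_cancel₀ _ (ne_of_gt hpos)
      rw [map_smul, smul_eq_mul, h2] at h1
      linarith
    set g : X →L[ℝ] ℝ := -f with hg
    have hgK : ∀ k ∈ K, 0 ≤ g k := by
      intro k hk; simp only [hg, ContinuousLinearMap.neg_apply]; linarith [hfle k hk]
    obtain ⟨m, hm⟩ := hdb g hgK
    have hmA : ∀ a ∈ A, m ≤ g a := fun a ha => hm ⟨a, ha, rfl⟩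
    -- m is a lower bound of g on closure (convexHull (A + K))
    have hbound : ∀ x ∈ closure (convexHull ℝ (A + K)), m ≤ g x := by
      have h1 : A + K ⊆ {x | m ≤ g x} := by
        rintro z ⟨a, ha, k, hk, rfl⟩
        have := hgK k hk
        have := hmA a ha
        simp only [Set.mem_setOf_eq, map_add]
        linarith
      have h2 : convexHull ℝ (A + K) ⊆ {x | m ≤ g x} :=
        convexHull_min h1 (convex_halfSpace_ge (g : X →ₗ[ℝ] ℝ).isLinear m)
      have h3 : IsClosed {x | m ≤ g x} := isClosed_le continuous_const g.continuous
      exact closure_minimal h2 h3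
    obtain ⟨a0, ha0⟩ := hA
    have hz : a0 ∈ closure (convexHull ℝ (A + K)) :=
      subset_closure (subset_convexHull ℝ _ ⟨a0, ha0, 0, hK0, by simp⟩)
    have hgu : g u < 0 := by
      simp only [hg, ContinuousLinearMap.neg_apply]; linarith
    set t : ℝ := (g a0 - m + 1) / (-g u) with hts
    have ht0 : 0 ≤ t := by
      apply div_nonneg _ (by linarith)
      nlinarith [hbound a0 hz]
    have hmem := hu a0 hz t ht0
    have := hbound _ hmem
    rw [map_add, map_smul] at this
    have hcan : t * -g u = g a0 - m + 1 :=
      div_mul_cancel₀ _ (ne_of_gt (by linarith : (0:ℝ) < -g u))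
    rw [smul_eq_mul] at this
    nlinarith [hcan, this]
  · -- K ⊆ rec cone
    intro u hu c hc t ht
    exact hstab _ (hKcone t ht u hu) c hc
end

section
/- For a nonempty set A ⊂ X with Ã = cl conv(A + K), the set A is dually K-bounded if and only if the barrier cone of Ã equals K⁻ = −K⁺. -/
open Pointwise

/-- `A` is dually K-bounded iff the barrier cone of `Ã = cl conv (A + K)`
equals `K⁻ = -K⁺`. -/
theorem dually_bounded_iff_barrier_eq
    {X : Type*} [NormedAddCommGroup X] [NormedSpace ℝ X]
    (K : Set X) (hKcl : IsClosed K) (hKconv : Convex ℝ K)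
    (hK0 : (0 : X) ∈ K)
    (hKcone : ∀ t : ℝ, 0 ≤ t → ∀ y ∈ K, t • y ∈ K)
    (A : Set X) (hA : A.Nonempty) :
    (∀ f : X →L[ℝ] ℝ, (∀ k ∈ K, 0 ≤ f k) → BddBelow (f '' A)) ↔
    {f : X →L[ℝ] ℝ | BddAbove (f '' closure (convexHull ℝ (A + K)))} =
      {f : X →L[ℝ] ℝ | ∀ k ∈ K, f k ≤ 0} := by
  obtain ⟨a, ha⟩ := hA
  have hsub : A + K ⊆ closure (convexHull ℝ (A + K)) :=
    fun x hx => subset_closure (subset_convexHull ℝ _ hx)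
  constructor
  · intro hdb
    ext f
    simp only [Set.mem_setOf_eq]
    constructor
    · rintro ⟨M, hM⟩ k hk
      have haM : f a ≤ M := hM ⟨a + 0, hsub (Set.add_mem_add ha hK0), by simp⟩
      by_contra hpos
      push_neg at hpos
      set t : ℝ := (M - f a + 1) / f k with ht
      have ht0 : 0 ≤ t := div_nonneg (by linarith) hpos.le
      have hmem : f (a + t • k) ≤ M :=
        hM ⟨a + t • k, hsub (Set.add_mem_add ha (hKcone t ht0 k hk)), rfl⟩
      have : f a + t * f k ≤ M := by
        simpa [map_add, map_smul, smul_eq_mul] using hmem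
      rw [ht, div_mul_cancel₀ _ (ne_of_gt hpos)] at this
      linarith
    · intro hf
      obtain ⟨m, hm⟩ := hdb (-f) (fun k hk => by simpa using hf k hk)
      refine ⟨-m, ?_⟩
      rintro y ⟨x, hx, rfl⟩
      have hS : closure (convexHull ℝ (A + K)) ⊆ {x | f x ≤ -m} := by
        apply closure_minimal
        · apply convexHull_min
          · rintro z ⟨b, hb, k, hk, rfl⟩
            have h1 : m ≤ -f b := hm ⟨b, hb, rfl⟩
            have h2 : f k ≤ 0 := hf k hk
            simp only [Set.mem_setOf_eq, map_add]
            linarith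
          · exact convex_halfSpace_le ⟨fun _ _ => by simp, fun c x => by simp⟩ (-m)
        · exact IsClosed.preimage f.continuous isClosed_Iic
      exact hS hx
  · intro heq f hf
    have hmf : (-f) ∈ {f : X →L[ℝ] ℝ | BddAbove (f '' closure (convexHull ℝ (A + K)))} := by
      rw [heq]
      intro k hk
      simpa using hf k hk
    obtain ⟨M, hM⟩ := hmf
    refine ⟨-M, ?_⟩
    rintro y ⟨b, hb, rfl⟩
    have : -f b ≤ M := hM ⟨b + 0, hsub (Set.add_mem_add hb hK0), by simp⟩
    linarith
end

section
/- A nonempty set A ⊂ X is K-bounded (i.e., A ⊂ ℓ·D_X + K for some ℓ ≥ 0) if and only if rec Ã = K and Ã is hyperbolic, where Ã = cl conv(A + K). -/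
/-!
If `A ⊆ ℓ·D_X + K`, then `K + K ⊆ K` gives `conv (A + K) ⊆ ℓ·D_X + K`, and passing to the closure
costs at most one more unit ball, so `Ã ⊆ (ℓ + 1)·D_X + K`. A recession direction `u` of a nonempty
set squeezed into `r·D_X + K` is a limit of the vectors `t⁻¹ • k_t` with `k_t ∈ K` as `t → ∞`, so
`rec Ã ⊆ K`; the reverse inclusion holds because `Ã` is stable under translation by `K`. Conversely,
`A ⊆ Ã ⊆ ℓ·D_X + rec Ã = ℓ·D_X + K`.
-/

open Pointwise

/-- The recession cone of a set `C`. -/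
def recessionCone {X : Type*} [NormedAddCommGroup X] [NormedSpace ℝ X] (C : Set X) : Set X :=
  {u : X | ∀ c ∈ C, ∀ t : ℝ, 0 ≤ t → c + t • u ∈ C}

/-- A closed convex set `C` is hyperbolic if `C ⊆ ℓ·D_X + rec C` for some `ℓ > 0`. -/
def IsHyperbolic {X : Type*} [NormedAddCommGroup X] [NormedSpace ℝ X] (C : Set X) : Prop :=
  ∃ ℓ : ℝ, 0 < ℓ ∧ C ⊆ Metric.closedBall (0 : X) ℓ + recessionCone C

open Metric Set Filter Topology

section

variable {X : Type*} [NormedAddCommGroup X] [NormedSpace ℝ X] {K : Set X}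

theorem Convex.add_self_subset_of_smul_mem (hKconv : Convex ℝ K)
    (hKcone : ∀ t : ℝ, 0 ≤ t → ∀ y ∈ K, t • y ∈ K) : K + K ⊆ K := by
  rintro _ ⟨a, ha, b, hb, rfl⟩
  have hmid : (1 / 2 : ℝ) • a + (1 / 2 : ℝ) • b ∈ K :=
    hKconv ha hb (by norm_num) (by norm_num) (by norm_num)
  convert hKcone 2 zero_le_two _ hmid using 1
  rw [smul_add, smul_smul, smul_smul]
  norm_num

theorem vadd_closure_convexHull_subset {S : Set X} {k : X} (h : k +ᵥ S ⊆ S) :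
    k +ᵥ closure (convexHull ℝ S) ⊆ closure (convexHull ℝ S) := by
  rw [← closure_vadd, ← convexHull_vadd]
  exact closure_mono (convexHull_mono h)

theorem subset_recessionCone_closure_convexHull_add (hKconv : Convex ℝ K)
    (hKcone : ∀ t : ℝ, 0 ≤ t → ∀ y ∈ K, t • y ∈ K) (A : Set X) :
    K ⊆ recessionCone (closure (convexHull ℝ (A + K))) := by
  intro u hu c hc t ht
  have hinv : (t • u) +ᵥ (A + K) ⊆ A + K := by
    rintro _ ⟨_, ⟨a, ha, k, hk, rfl⟩, rfl⟩
    refine ⟨a, ha, t • u + k, hKconv.add_self_subset_of_smul_mem hKcone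
      ⟨_, hKcone t ht u hu, k, hk, rfl⟩, ?_⟩
    simp only [vadd_eq_add]
    abel
  rw [add_comm c]
  exact vadd_closure_convexHull_subset hinv (vadd_mem_vadd_set hc)

theorem convexHull_add_subset_closedBall_add (hKconv : Convex ℝ K)
    (hKcone : ∀ t : ℝ, 0 ≤ t → ∀ y ∈ K, t • y ∈ K) {A : Set X} {ℓ : ℝ}
    (hA : A ⊆ closedBall 0 ℓ + K) : convexHull ℝ (A + K) ⊆ closedBall 0 ℓ + K := by
  refine convexHull_min ?_ ((convex_closedBall _ _).add hKconv)
  calc A + K ⊆ closedBall 0 ℓ + K + K := add_subset_add_right hA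
    _ = closedBall 0 ℓ + (K + K) := add_assoc _ _ _
    _ ⊆ closedBall 0 ℓ + K := add_subset_add_left (hKconv.add_self_subset_of_smul_mem hKcone)

theorem closure_closedBall_add_subset {ℓ δ : ℝ} (hℓ : 0 ≤ ℓ) (hδ : 0 < δ) (S : Set X) :
    closure (closedBall 0 ℓ + S) ⊆ closedBall 0 (ℓ + δ) + S :=
  calc closure (closedBall 0 ℓ + S)
      ⊆ closedBall 0 ℓ + S + ball 0 δ := by
        rw [add_ball_zero]; exact closure_subset_thickening hδ _
    _ = ball 0 (ℓ + δ) + S := by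
        rw [add_right_comm, closedBall_add_ball hℓ hδ, add_zero]
    _ ⊆ closedBall 0 (ℓ + δ) + S := add_subset_add_right ball_subset_closedBall

theorem recessionCone_subset_of_subset_closedBall_add (hKcl : IsClosed K)
    (hKcone : ∀ t : ℝ, 0 ≤ t → ∀ y ∈ K, t • y ∈ K) {C : Set X} (hC : C.Nonempty) {r : ℝ}
    (hCK : C ⊆ closedBall 0 r + K) : recessionCone C ⊆ K := by
  intro u hu
  obtain ⟨c, hc⟩ := hC
  have hdecomp (n : ℕ) : ∃ d ∈ closedBall (0 : X) r, ∃ k ∈ K, d + k = c + ((n : ℝ) + 1) • u :=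
    hCK (hu c hc _ (by positivity))
  choose d hd k hk hdk using hdecomp
  have hnorm (n : ℕ) : ‖((n : ℝ) + 1)⁻¹ • k n - u‖ ≤ (‖c‖ + r) * (1 / ((n : ℝ) + 1)) := by
    have hkn : ((n : ℝ) + 1)⁻¹ • k n - u = ((n : ℝ) + 1)⁻¹ • (c - d n) := by
      rw [eq_sub_of_add_eq' (hdk n), smul_sub, smul_add, inv_smul_smul₀ (by positivity), smul_sub]
      abel
    rw [hkn, norm_smul, norm_inv, Real.norm_of_nonneg (by positivity), one_div, mul_comm]
    gcongr
    calc ‖c - d n‖ ≤ ‖c‖ + ‖d n‖ := norm_sub_le _ _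
      _ ≤ ‖c‖ + r := by gcongr; exact mem_closedBall_zero_iff.mp (hd n)
  have hlim : Tendsto (fun n : ℕ => ((n : ℝ) + 1)⁻¹ • k n) atTop (𝓝 u) := by
    refine tendsto_iff_norm_sub_tendsto_zero.mpr (squeeze_zero (fun n => norm_nonneg _) hnorm ?_)
    simpa using tendsto_one_div_add_atTop_nhds_zero_nat.const_mul (‖c‖ + r)
  exact hKcl.mem_of_tendsto hlim (.of_forall fun n => hKcone _ (by positivity) _ (hk n))

end

/-- `A` is K-bounded iff `rec Ã = K` and `Ã` is hyperbolic. -/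
theorem bounded_iff_rec_eq_and_hyperbolic
    {X : Type*} [NormedAddCommGroup X] [NormedSpace ℝ X]
    (K : Set X) (hKcl : IsClosed K) (hKconv : Convex ℝ K)
    (hK0 : (0 : X) ∈ K)
    (hKcone : ∀ t : ℝ, 0 ≤ t → ∀ y ∈ K, t • y ∈ K)
    (A : Set X) (hA : A.Nonempty) :
    (∃ ℓ : ℝ, 0 ≤ ℓ ∧ A ⊆ Metric.closedBall (0 : X) ℓ + K) ↔
    (recessionCone (closure (convexHull ℝ (A + K))) = K ∧
      IsHyperbolic (closure (convexHull ℝ (A + K)))) := by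
  set C := closure (convexHull ℝ (A + K))
  have hAC : A ⊆ C :=
    (subset_add_left A hK0).trans (subset_convexHull ℝ _) |>.trans subset_closure
  constructor
  · rintro ⟨ℓ, hℓ, hAK⟩
    have hCK : C ⊆ closedBall 0 (ℓ + 1) + K :=
      (closure_mono (convexHull_add_subset_closedBall_add hKconv hKcone hAK)).trans
        (closure_closedBall_add_subset hℓ one_pos K)
    have hrec : recessionCone C = K :=
      (recessionCone_subset_of_subset_closedBall_add hKcl hKcone (hA.mono hAC) hCK).antisymm
        (subset_recessionCone_closure_convexHull_add hKconv hKcone A)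
    exact ⟨hrec, ℓ + 1, by positivity, hrec ▸ hCK⟩
  · rintro ⟨hrec, ℓ, hℓ, hCK⟩
    exact ⟨ℓ, hℓ.le, hAC.trans (hrec ▸ hCK)⟩
end

section
/- A nonempty set A ⊂ X is dually K-bounded if and only if rec Ã = K and Ã is pseudo-hyperbolic, where Ã = cl conv(A + K). -/
open Pointwise

/-- The barrier cone of a set `C`. -/
def barrierCone {X : Type*} [NormedAddCommGroup X] [NormedSpace ℝ X] (C : Set X) :
    Set (X →L[ℝ] ℝ) :=
  {f : X →L[ℝ] ℝ | BddAbove (f '' C)}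

/-- `C` is pseudo-hyperbolic if `bar C = (rec C)⁻`. -/
def IsPseudoHyperbolic {X : Type*} [NormedAddCommGroup X] [NormedSpace ℝ X] (C : Set X) : Prop :=
  barrierCone C = {f : X →L[ℝ] ℝ | ∀ u ∈ recessionCone C, f u ≤ 0}

/-- Transfer of an upper bound from `A` to `cl conv (A + K)`. -/
lemma aux_bound_transfer {X : Type*} [NormedAddCommGroup X] [NormedSpace ℝ X]
    (K A : Set X) (f : X →L[ℝ] ℝ) (M : ℝ)
    (hK : ∀ k ∈ K, f k ≤ 0) (hAb : ∀ a ∈ A, f a ≤ M) :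
    ∀ x ∈ closure (convexHull ℝ (A + K)), f x ≤ M := by
  have h1 : A + K ⊆ {x | f x ≤ M} := by
    rintro x ⟨a, ha, k, hk, rfl⟩
    simp only [Set.mem_setOf_eq, map_add]
    linarith [hAb a ha, hK k hk]
  have hconv : Convex ℝ {x : X | f x ≤ M} :=
    convex_halfSpace_le (f : X →ₗ[ℝ] ℝ).isLinear M
  have hcl : IsClosed {x : X | f x ≤ M} := isClosed_le f.continuous continuous_const
  exact fun x hx => closure_minimal (convexHull_min h1 hconv) hcl hx

/-- `A` is dually K-bounded iff `rec Ã = K` and `Ã` is pseudo-hyperbolic. -/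
theorem dually_bounded_iff_rec_eq_and_pseudoHyperbolic
    {X : Type*} [NormedAddCommGroup X] [NormedSpace ℝ X]
    (K : Set X) (hKcl : IsClosed K) (hKconv : Convex ℝ K)
    (hK0 : (0 : X) ∈ K)
    (hKcone : ∀ t : ℝ, 0 ≤ t → ∀ y ∈ K, t • y ∈ K)
    (A : Set X) (hA : A.Nonempty) :
    (∀ f : X →L[ℝ] ℝ, (∀ k ∈ K, 0 ≤ f k) → BddBelow (f '' A)) ↔
    (recessionCone (closure (convexHull ℝ (A + K))) = K ∧
      IsPseudoHyperbolic (closure (convexHull ℝ (A + K)))) := by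
  set Atil := closure (convexHull ℝ (A + K)) with hAtil
  -- Basic facts
  have hKK : K + K ⊆ K := by
    rintro x ⟨k1, h1, k2, h2, rfl⟩
    have := hKconv h1 h2 (by norm_num : (0:ℝ) ≤ 1/2) (by norm_num : (0:ℝ) ≤ 1/2) (by norm_num)
    have h2' := hKcone 2 (by norm_num) _ this
    simpa [smul_smul, smul_add] using h2'
  have hAsub : A ⊆ Atil := by
    intro a ha
    apply subset_closure
    apply subset_convexHull
    exact ⟨a, ha, 0, hK0, add_zero a⟩
  have hAtilne : Atil.Nonempty := hA.mono hAsub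
  -- Atil + K ⊆ Atil
  have hAtilK : ∀ c ∈ Atil, ∀ k ∈ K, c + k ∈ Atil := by
    intro c hc k hk
    have hmaps : Set.MapsTo (· + k) (convexHull ℝ (A + K)) (convexHull ℝ (A + K)) := by
      intro x hx
      have hk' : k ∈ convexHull ℝ K := subset_convexHull ℝ K hk
      have : x + k ∈ convexHull ℝ (A + K) + convexHull ℝ K :=
        Set.add_mem_add hx hk'
      rw [← convexHull_add] at this
      refine convexHull_mono ?_ this
      rw [add_assoc]
      exact Set.add_subset_add_left hKK
    have h := map_mem_closure (continuous_add_right k) hc hmaps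
    exact h
  -- K ⊆ rec Atil
  have hKrec : K ⊆ recessionCone Atil := by
    intro u hu c hc t ht
    exact hAtilK c hc _ (hKcone t ht u hu)
  -- bar Atil ⊆ (rec Atil)⁻ always
  have hbar_sub : ∀ f ∈ barrierCone Atil, ∀ u ∈ recessionCone Atil, f u ≤ 0 := by
    intro f hf u hu
    obtain ⟨M, hM⟩ := hf
    obtain ⟨c, hc⟩ := hAtilne
    by_contra hpos
    push_neg at hpos
    have hfc : f c ≤ M := hM ⟨c, hc, rfl⟩
    have ht0 : (0:ℝ) ≤ (M - f c + 1) / f u := by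
      apply div_nonneg <;> linarith
    have hmem := hu c hc _ ht0
    have hle : f (c + ((M - f c + 1) / f u) • u) ≤ M := hM ⟨_, hmem, rfl⟩
    rw [map_add, map_smul] at hle
    have : (M - f c + 1) / f u * f u = M - f c + 1 := div_mul_cancel₀ _ (ne_of_gt hpos)
    simp only [smul_eq_mul] at hle
    rw [this] at hle
    linarith
  constructor
  · -- forward direction
    intro hdb
    have hrec : recessionCone Atil = K := by
      apply Set.Subset.antisymm _ hKrec
      intro u hu
      by_contra hnot
      obtain ⟨f, r, hfK, hru⟩ := geometric_hahn_banach_closed_point hKconv hKcl hnot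
      -- f < r on K, r < f u.  Since K is a cone with 0 ∈ K, f ≤ 0 on K and 0 < r.
      have hr0 : 0 < r := by simpa using hfK 0 hK0
      have hfK0 : ∀ k ∈ K, f k ≤ 0 := by
        intro k hk
        by_contra hp
        push_neg at hp
        have ht : (0:ℝ) ≤ r / f k := le_of_lt (by positivity)
        have := hfK _ (hKcone (r / f k) ht k hk)
        rw [map_smul, smul_eq_mul, div_mul_cancel₀ _ (ne_of_gt hp)] at this
        exact lt_irrefl r this
      have hfu : 0 < f u := lt_trans hr0 hru
      -- -f ≥ 0 on K, so f is bounded above on A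
      obtain ⟨m, hm⟩ := hdb (-f) (fun k hk => by
        simpa using neg_nonneg.mpr (hfK0 k hk))
      have hAb : ∀ a ∈ A, f a ≤ -m := by
        intro a ha
        have := hm ⟨a, ha, rfl⟩
        simp only [ContinuousLinearMap.neg_apply] at this
        linarith
      have hbound := aux_bound_transfer K A f (-m) hfK0 hAb
      obtain ⟨c, hc⟩ := hAtilne
      have hfc := hbound c hc
      have ht0 : (0:ℝ) ≤ (-m - f c + 1) / f u := by
        apply div_nonneg <;> linarith
      have hmem := hu c hc _ ht0
      have hle := hbound _ hmem
      rw [map_add, map_smul] at hle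
      simp only [smul_eq_mul] at hle
      rw [div_mul_cancel₀ _ (ne_of_gt hfu)] at hle
      linarith
    refine ⟨hrec, ?_⟩
    ext f
    simp only [Set.mem_setOf_eq]
    constructor
    · exact hbar_sub f
    · intro hf
      have hfK0 : ∀ k ∈ K, f k ≤ 0 := fun k hk => hf k (hKrec hk)
      obtain ⟨m, hm⟩ := hdb (-f) (fun k hk => by
        simpa using neg_nonneg.mpr (hfK0 k hk))
      have hAb : ∀ a ∈ A, f a ≤ -m := by
        intro a ha
        have := hm ⟨a, ha, rfl⟩
        simp only [ContinuousLinearMap.neg_apply] at this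
        linarith
      exact ⟨-m, by rintro y ⟨x, hx, rfl⟩; exact aux_bound_transfer K A f (-m) hfK0 hAb x hx⟩
  · -- backward direction
    rintro ⟨hrec, hph⟩ f hf
    have : -f ∈ barrierCone Atil := by
      rw [hph]
      intro u hu
      rw [hrec] at hu
      simpa using hf u hu
    obtain ⟨M, hM⟩ := this
    refine ⟨-M, ?_⟩
    rintro y ⟨a, ha, rfl⟩
    have := hM ⟨a, hAsub ha, rfl⟩
    simp only [ContinuousLinearMap.neg_apply] at this
    linarith
end

section
/- (Conic cancellation for dually cone-bounded sets) Let A, B, C ⊂ X be nonempty sets with C dually K-bounded. If A + C ⊂ cl(C + B + K), then A ⊂ cl conv(B + K). -/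
open Pointwise

/-- Conic cancellation rule for dually cone-bounded sets:
if `C` is dually K-bounded and `A + C ⊆ cl(C + B + K)`, then `A ⊆ cl conv (B + K)`. -/
theorem conic_cancellation
    {X : Type*} [NormedAddCommGroup X] [NormedSpace ℝ X]
    (K : Set X) (hKcl : IsClosed K) (hKconv : Convex ℝ K)
    (hK0 : (0 : X) ∈ K)
    (hKcone : ∀ t : ℝ, 0 ≤ t → ∀ y ∈ K, t • y ∈ K)
    (A B C : Set X) (hA : A.Nonempty) (hB : B.Nonempty) (hC : C.Nonempty)
    (hdb : ∀ f : X →L[ℝ] ℝ, (∀ k ∈ K, 0 ≤ f k) → BddBelow (f '' C))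
    (hincl : A + C ⊆ closure (C + B + K)) :
    A ⊆ closure (convexHull ℝ (B + K)) := by
  intro a ha
  by_contra h
  obtain ⟨f, u, hfa, hfs⟩ := geometric_hahn_banach_point_closed
    (convex_convexHull ℝ (B + K)).closure isClosed_closure h
  obtain ⟨b, hb⟩ := hB
  have hmemBK : ∀ b' ∈ B, ∀ k ∈ K, b' + k ∈ closure (convexHull ℝ (B + K)) := fun b' hb' k hk =>
    subset_closure (subset_convexHull ℝ _ ⟨b', hb', k, hk, rfl⟩)
  have hub : ∀ b' ∈ B, u < f b' := by
    intro b' hb'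
    have := hfs _ (hmemBK b' hb' 0 hK0)
    simpa using this
  have hKpos : ∀ k ∈ K, 0 ≤ f k := by
    intro k hk
    by_contra hneg
    push_neg at hneg
    set t : ℝ := (f b - u + 1) / (-f k) with ht
    have htpos : 0 < t := div_pos (by have := hub b hb; linarith) (by linarith)
    have hval : f (b + t • k) = f b + t * f k := by
      simp [map_add, map_smul, smul_eq_mul]
    have hle := hfs _ (hmemBK b hb (t • k) (hKcone t htpos.le k hk))
    rw [hval, ht] at hle
    rw [div_mul_eq_mul_div, mul_comm] at hle
    have hfk : f k ≠ 0 := by linarith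
    have : (f k * (f b - u + 1)) / (-f k) = -(f b - u + 1) := by
      rw [div_eq_iff (by linarith : -f k ≠ 0)]; ring
    rw [this] at hle
    linarith
  have hbdd := hdb f hKpos
  have hne : (f '' C).Nonempty := hC.image f
  set m := sInf (f '' C) with hm
  have hclb : ∀ z ∈ closure (C + B + K), m + u ≤ f z := by
    have hsub : C + B + K ⊆ f ⁻¹' Set.Ici (m + u) := by
      rintro _ ⟨_, ⟨c, hc, b', hb', rfl⟩, k, hk, rfl⟩
      have h1 : m ≤ f c := csInf_le hbdd ⟨c, hc, rfl⟩
      have h2 := hub b' hb'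
      have h3 := hKpos k hk
      simp only [Set.mem_preimage, Set.mem_Ici, map_add]
      linarith
    intro z hz
    exact closure_minimal hsub (IsClosed.preimage f.continuous isClosed_Ici) hz
  have hlow : ∀ c ∈ C, m + (u - f a) ≤ f c := by
    intro c hc
    have : a + c ∈ closure (C + B + K) := hincl ⟨a, ha, c, hc, rfl⟩
    have := hclb _ this
    rw [map_add] at this
    linarith
  have : m + (u - f a) ≤ m := le_csInf hne (by rintro _ ⟨c, hc, rfl⟩; exact hlow c hc)
  linarith
end

section
/- Let A, B ⊂ X be nonempty sets and E ⊂ X* a weak*-closed convex cone. Then inf x*(A) ≥ inf x*(B) for all x* ∈ E if and only if A ⊂ cl conv(B + E⁺), where E⁺ = {x ∈ X ∣ x*(x) ≥ 0 for all x* ∈ E}. -/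
/-!
Each `x* ∈ E` is bounded below by `inf x*(B)` on `B + E⁺`, hence on the closed convex hull of
`B + E⁺`; this gives the easy direction. Conversely, a point `a ∉ cl conv(B + E⁺)` is separated
from that set by some `g ∈ X*` with `g a < u ≤ inf g(B + E⁺)`. Being bounded below on a translate
of the cone `E⁺`, `g` is nonnegative on `E⁺`, so `g ∈ E` by the bipolar theorem for the
weak*-closed cone `E` (weak*-continuous functionals on `X*` are evaluations at points of `X`).
Then `inf g(A) ≤ g a < u ≤ inf g(B)` contradicts the hypothesis at `g`.
-/

open Pointwise

lemma Convex.add_mem_of_smul_mem {E : Type*} [AddCommGroup E] [Module ℝ E] {s : Set E}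
    (hs : Convex ℝ s) (hcone : ∀ t : ℝ, 0 ≤ t → ∀ x ∈ s, t • x ∈ s) {x y : E}
    (hx : x ∈ s) (hy : y ∈ s) : x + y ∈ s := by
  have hmid := hs hx hy (by norm_num : (0 : ℝ) ≤ 1 / 2) (by norm_num : (0 : ℝ) ≤ 1 / 2)
    (by norm_num)
  simpa [← smul_add, smul_smul] using hcone 2 zero_le_two _ hmid

def ProperCone.ofConvex {E : Type*} [AddCommGroup E] [Module ℝ E] [TopologicalSpace E]
    (s : Set E) (hcl : IsClosed s) (hconv : Convex ℝ s) (h0 : 0 ∈ s)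
    (hcone : ∀ t : ℝ, 0 ≤ t → ∀ x ∈ s, t • x ∈ s) : ProperCone ℝ E where
  carrier := s
  add_mem' := hconv.add_mem_of_smul_mem hcone
  zero_mem' := h0
  smul_mem' c _ hx := hcone c c.2 _ hx
  isClosed' := hcl

instance WeakDual.instLocallyConvexSpace {X : Type*} [AddCommGroup X] [TopologicalSpace X]
    [Module ℝ X] : LocallyConvexSpace ℝ (WeakDual ℝ X) :=
  WeakBilin.locallyConvexSpace

theorem WeakDual.mem_of_nonneg_on_polar {X : Type*} [AddCommGroup X] [TopologicalSpace X]
    [Module ℝ X] (C : ProperCone ℝ (WeakDual ℝ X)) {g : WeakDual ℝ X}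
    (hg : ∀ x : X, (∀ f ∈ C, 0 ≤ f x) → 0 ≤ g x) : g ∈ C := by
  by_contra hgC
  obtain ⟨φ, hφC, hφg⟩ := C.hyperplane_separation_point hgC
  obtain ⟨x, rfl⟩ := LinearMap.dualEmbedding_surjective (topDualPairing ℝ X) φ
  exact (hg x hφC).not_gt hφg

lemma LinearMap.nonneg_on_cone_of_le_add {X : Type*} [AddCommGroup X] [Module ℝ X]
    (g : X →ₗ[ℝ] ℝ) {K : Set X} (hK : ∀ t : ℝ, 0 ≤ t → ∀ k ∈ K, t • k ∈ K) {b : X} {u : ℝ}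
    (hu : ∀ k ∈ K, u ≤ g (b + k)) {k : X} (hk : k ∈ K) : 0 ≤ g k := by
  have hub : u ≤ g b := by simpa using hu _ (hK 0 le_rfl k hk)
  by_contra! hneg
  -- at `t = (g b - u + 1) / -g k` the value `g (b + t • k)` drops to `u - 1`
  have hscaled := hu _ (hK ((g b - u + 1) / -g k) (div_nonneg (by linarith) (by linarith)) k hk)
  rw [map_add, map_smul, smul_eq_mul, div_mul_eq_mul_div, div_neg,
    mul_div_cancel_right₀ _ hneg.ne] at hscaled
  linarith

lemma ContinuousLinearMap.closure_convexHull_subset_setOf_le {X : Type*} [AddCommGroup X]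
    [TopologicalSpace X] [Module ℝ X] (f : X →L[ℝ] ℝ) {m : EReal} {s : Set X}
    (hs : ∀ x ∈ s, m ≤ f x) : closure (convexHull ℝ s) ⊆ {x | m ≤ f x} := by
  have hconv : Convex ℝ {r : ℝ | m ≤ r} :=
    (Set.ordConnected_Ici.preimage_mono EReal.coe_strictMono.monotone).convex
  refine closure_minimal (convexHull_min hs (hconv.linear_preimage f.toLinearMap)) ?_
  exact isClosed_le continuous_const (continuous_coe_real_ereal.comp f.continuous)

theorem inf_ineq_iff_subset_closure_general
    {X : Type*} [NormedAddCommGroup X] [NormedSpace ℝ X]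
    (E : Set (WeakDual ℝ X)) (hEcl : IsClosed E) (hEconv : Convex ℝ E)
    (hE0 : (0 : WeakDual ℝ X) ∈ E)
    (hEcone : ∀ t : ℝ, 0 ≤ t → ∀ f ∈ E, t • f ∈ E)
    (A B : Set X) (hB : B.Nonempty) :
    (∀ f ∈ E, (⨅ b ∈ B, (f b : EReal)) ≤ ⨅ a ∈ A, (f a : EReal)) ↔
    A ⊆ closure (convexHull ℝ (B + {x : X | ∀ f ∈ E, 0 ≤ f x})) := by
  set K := {x : X | ∀ f ∈ E, 0 ≤ f x}
  have hK : ∀ t : ℝ, 0 ≤ t → ∀ k ∈ K, t • k ∈ K := fun t ht k hk f hf => by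
    simpa using mul_nonneg ht (hk f hf)
  constructor
  · intro hinf a ha
    by_contra haC
    obtain ⟨g, u, hga, hgC⟩ :=
      geometric_hahn_banach_point_closed (convex_convexHull ℝ _).closure isClosed_closure haC
    have hgBK : ∀ b ∈ B, ∀ k ∈ K, u ≤ g (b + k) := fun b hb k hk =>
      (hgC _ (subset_closure (subset_convexHull ℝ _ (Set.add_mem_add hb hk)))).le
    obtain ⟨b, hb⟩ := hB
    have hgE : StrongDual.toWeakDual g ∈ E :=
      WeakDual.mem_of_nonneg_on_polar (.ofConvex E hEcl hEconv hE0 hEcone)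
        fun _ => g.toLinearMap.nonneg_on_cone_of_le_add hK (hgBK b hb)
    have hub : (u : EReal) ≤ ⨅ b ∈ B, (g b : EReal) := le_iInf₂ fun b hb =>
      EReal.coe_le_coe_iff.mpr (by simpa using hgBK b hb 0 (by simp [K]))
    have hua : (u : EReal) ≤ g a := (hub.trans (hinf _ hgE)).trans (iInf₂_le a ha)
    exact (EReal.coe_le_coe_iff.mp hua).not_gt hga
  · intro hsub f hf
    refine le_iInf₂ fun a ha =>
      (WeakDual.toStrongDual f).closure_convexHull_subset_setOf_le ?_ (hsub ha)
    rintro _ ⟨b, hb, k, hk, rfl⟩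
    calc (⨅ b ∈ B, (f b : EReal)) ≤ f b := iInf₂_le b hb
      _ ≤ f (b + k) := EReal.coe_le_coe_iff.mpr (by rw [map_add]; linarith [hk f hf])

/-- For a weak*-closed convex cone `E ⊆ X*`:
`inf x*(A) ≥ inf x*(B)` for all `x* ∈ E` iff `A ⊆ cl conv (B + E⁺)`. -/
theorem inf_ineq_iff_subset_closure
    {X : Type*} [NormedAddCommGroup X] [NormedSpace ℝ X]
    (E : Set (WeakDual ℝ X)) (hEcl : IsClosed E) (hEconv : Convex ℝ E)
    (hE0 : (0 : WeakDual ℝ X) ∈ E)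
    (hEcone : ∀ t : ℝ, 0 ≤ t → ∀ f ∈ E, t • f ∈ E)
    (A B : Set X) (hA : A.Nonempty) (hB : B.Nonempty) :
    (∀ f ∈ E, (⨅ b ∈ B, (f b : EReal)) ≤ ⨅ a ∈ A, (f a : EReal)) ↔
    A ⊆ closure (convexHull ℝ (B + {x : X | ∀ f ∈ E, 0 ≤ f x})) :=
  inf_ineq_iff_subset_closure_general E hEcl hEconv hE0 hEcone A B hB
end

section
/- Let C ⊂ X be such that C̃ = cl conv(C + K) is pseudo-hyperbolic. Then C is dually K-bounded if and only if the following cancellation property holds: for all nonempty A, B ⊂ X, the inclusion A + C̃ ⊂ cl conv(B + C̃ + K) implies A ⊂ cl conv(B + K). -/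
open Pointwise

lemma le_of_mem_closure_convexHull {X : Type*} [NormedAddCommGroup X] [NormedSpace ℝ X]
    (f : X →L[ℝ] ℝ) (r : ℝ) (S : Set X) (h : ∀ x ∈ S, f x ≤ r) :
    ∀ x ∈ closure (convexHull ℝ S), f x ≤ r := by
  intro x hx
  have hconv : Convex ℝ {x : X | f x ≤ r} := by
    intro a ha b hb s t hs ht hst
    simp only [Set.mem_setOf_eq, map_add, map_smul, smul_eq_mul] at *
    have h1 : s * f a ≤ s * r := mul_le_mul_of_nonneg_left ha hs
    have h2 : t * f b ≤ t * r := mul_le_mul_of_nonneg_left hb ht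
    have h3 : s * r + t * r = r := by rw [← add_mul, hst, one_mul]
    linarith
  have hcl : IsClosed {x : X | f x ≤ r} := isClosed_le f.continuous continuous_const
  exact closure_minimal (convexHull_min h hconv) hcl hx

/-- If `C̃` is pseudo-hyperbolic, then `C` is dually K-bounded iff the cancellation
property holds for all nonempty `A, B`. -/
theorem dually_bounded_iff_cancellation
    {X : Type*} [NormedAddCommGroup X] [NormedSpace ℝ X]
    (K : Set X) (hKcl : IsClosed K) (hKconv : Convex ℝ K)
    (hK0 : (0 : X) ∈ K)
    (hKcone : ∀ t : ℝ, 0 ≤ t → ∀ y ∈ K, t • y ∈ K)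
    (C : Set X) (hC : C.Nonempty)
    (hph : IsPseudoHyperbolic (closure (convexHull ℝ (C + K)))) :
    (∀ f : X →L[ℝ] ℝ, (∀ k ∈ K, 0 ≤ f k) → BddBelow (f '' C)) ↔
    (∀ A B : Set X, A.Nonempty → B.Nonempty →
      A + closure (convexHull ℝ (C + K)) ⊆
        closure (convexHull ℝ (B + closure (convexHull ℝ (C + K)) + K)) →
      A ⊆ closure (convexHull ℝ (B + K))) := by
  set Ct := closure (convexHull ℝ (C + K)) with hCtdef
  have hCsub : C ⊆ Ct := fun c hc =>
    subset_closure (subset_convexHull ℝ _ ⟨c, hc, 0, hK0, add_zero c⟩)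
  have hCtne : Ct.Nonempty := hC.mono hCsub
  constructor
  · -- dually bounded ⇒ cancellation
    intro hdb A B hA hB hsub a ha
    by_contra hna
    obtain ⟨f, α, hfs, hfa⟩ := geometric_hahn_banach_closed_point
      (convex_convexHull ℝ (B + K)).closure isClosed_closure hna
    obtain ⟨b, hb⟩ := hB
    have hbmem : ∀ k ∈ K, b + k ∈ closure (convexHull ℝ (B + K)) := fun k hk =>
      subset_closure (subset_convexHull ℝ _ ⟨b, hb, k, hk, rfl⟩)
    -- f ≤ 0 on K
    have hfK : ∀ k ∈ K, f k ≤ 0 := by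
      intro k hk
      by_contra h
      push_neg at h
      obtain ⟨t, ht⟩ := exists_nat_gt ((α - f b) / f k)
      have htk : (t : ℝ) • k ∈ K := hKcone t (Nat.cast_nonneg t) k hk
      have h1 := hfs _ (hbmem _ htk)
      rw [map_add, map_smul] at h1
      rw [div_lt_iff₀ h] at ht
      simp only [smul_eq_mul] at h1
      linarith
    -- f bounded above on C by -m
    obtain ⟨m, hm⟩ := hdb (-f) (fun k hk => by
      have := hfK k hk
      simp only [ContinuousLinearMap.neg_apply]
      linarith)
    have hfC : ∀ c ∈ C, f c ≤ -m := by
      intro c hc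
      have := hm (Set.mem_image_of_mem _ hc)
      simp only [ContinuousLinearMap.neg_apply] at this
      linarith
    -- f bounded above on Ct
    have hCtle : ∀ x ∈ Ct, f x ≤ -m := by
      rw [hCtdef]
      apply le_of_mem_closure_convexHull
      rintro y ⟨c, hc, k, hk, rfl⟩
      have := hfC c hc
      have := hfK k hk
      rw [map_add]; linarith
    -- S = sup of f on Ct
    set S := sSup (f '' Ct) with hSdef
    have hSbdd : BddAbove (f '' Ct) := ⟨-m, by rintro y ⟨x, hx, rfl⟩; exact hCtle x hx⟩
    have hSle : ∀ c ∈ Ct, f c ≤ S := fun c hc => le_csSup hSbdd (Set.mem_image_of_mem _ hc)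
    have hfb : ∀ x ∈ B, f x < α := fun x hx =>
      hfs _ (subset_closure (subset_convexHull ℝ _ ⟨x, hx, 0, hK0, add_zero x⟩))
    -- f ≤ α + S on closure convexHull (B + Ct + K)
    have hbig : ∀ x ∈ closure (convexHull ℝ (B + Ct + K)), f x ≤ α + S := by
      apply le_of_mem_closure_convexHull
      rintro z ⟨w, ⟨b', hb', c, hc, rfl⟩, k, hk, rfl⟩
      rw [map_add, map_add]
      have := hfb b' hb'
      have := hSle c hc
      have := hfK k hk
      linarith
    have key : ∀ c ∈ Ct, f c ≤ α + S - f a := by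
      intro c hc
      have hmem : a + c ∈ A + Ct := Set.add_mem_add ha hc
      have := hbig _ (hsub hmem)
      rw [map_add] at this
      linarith
    have : S ≤ α + S - f a :=
      csSup_le (hCtne.image f) (by rintro y ⟨c, hc, rfl⟩; exact key c hc)
    linarith
  · -- cancellation ⇒ dually bounded
    intro hcan f hfK
    by_contra hnb
    have hnegbar : (-f) ∉ barrierCone Ct := by
      rintro ⟨M, hM⟩
      apply hnb
      refine ⟨-M, ?_⟩
      rintro y ⟨c, hc, rfl⟩
      have := hM (Set.mem_image_of_mem (-f : X →L[ℝ] ℝ) (hCsub hc))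
      simp only [ContinuousLinearMap.neg_apply] at this
      linarith
    rw [hph] at hnegbar
    simp only [Set.mem_setOf_eq, not_forall] at hnegbar
    obtain ⟨u, hu, hgu⟩ := hnegbar
    push_neg at hgu
    simp only [ContinuousLinearMap.neg_apply] at hgu
    -- hgu : 0 < -(f u)
    have hsub : {u} + Ct ⊆ closure (convexHull ℝ (({0} : Set X) + Ct + K)) := by
      rintro x ⟨y, hy, c, hc, rfl⟩
      rw [Set.mem_singleton_iff] at hy
      rw [hy]
      have hcu : c + u ∈ Ct := by
        have := hu c hc 1 zero_le_one
        simpa using this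
      apply subset_closure
      apply subset_convexHull
      have hmem := Set.add_mem_add (Set.add_mem_add (Set.mem_singleton (0 : X)) hcu) hK0
      simpa [add_comm] using hmem
    have hres := hcan {u} {0} (Set.singleton_nonempty u) (Set.singleton_nonempty 0)
      hsub (Set.mem_singleton u)
    have hK' : ({0} : Set X) + K = K := by simp
    rw [hK', hKconv.convexHull_eq, hKcl.closure_eq] at hres
    have := hfK u hres
    linarith
end

section
/- If a nonempty set A ⊂ X is K-sequentially compact and int K ≠ ∅, then A is dually K-bounded and moreover for every x* ∈ K⁺ the infimum of x* over A is attained (A has the dual K-minimality property). -/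
open Pointwise Filter

/-- If `A` is K-sequentially compact and `int K ≠ ∅`, then `A` is dually K-bounded
and every positive functional attains its infimum on `A`. -/
theorem seq_cone_compact_dually_bounded_min
    {X : Type*} [NormedAddCommGroup X] [NormedSpace ℝ X]
    (K : Set X) (hKcl : IsClosed K) (hKconv : Convex ℝ K)
    (hK0 : (0 : X) ∈ K)
    (hKcone : ∀ t : ℝ, 0 ≤ t → ∀ y ∈ K, t • y ∈ K)
    (hint : (interior K).Nonempty)
    (A : Set X) (hA : A.Nonempty)
    (hseq : ∀ a : ℕ → X, (∀ n, a n ∈ A) →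
      ∃ c : ℕ → X, (∀ n, c n ∈ K) ∧
        ∃ φ : ℕ → ℕ, StrictMono φ ∧ ∃ l ∈ A,
          Tendsto (fun n => a (φ n) - c (φ n)) atTop (nhds l)) :
    ∀ f : X →L[ℝ] ℝ, (∀ k ∈ K, 0 ≤ f k) →
      BddBelow (f '' A) ∧ ∃ a ∈ A, ∀ b ∈ A, f a ≤ f b := by
  intro f hf
  -- key estimate: f (a - c) ≤ f a when c ∈ K
  have key : ∀ (x c : X), c ∈ K → f (x - c) ≤ f x := by
    intro x c hc
    have := hf c hc
    simp only [map_sub]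
    linarith
  have hbdd : BddBelow (f '' A) := by
    by_contra hnb
    rw [not_bddBelow_iff] at hnb
    have hsel : ∀ n : ℕ, ∃ x ∈ A, f x < -(n : ℝ) := fun n => by
      obtain ⟨y, ⟨x, hxA, rfl⟩, hy⟩ := hnb (-(n : ℝ)); exact ⟨x, hxA, hy⟩
    choose a haA hav using hsel
    obtain ⟨c, hcK, φ, hφ, l, hlA, hl⟩ := hseq a haA
    have hfl : Tendsto (fun n => f (a (φ n) - c (φ n))) atTop (nhds (f l)) :=
      (f.continuous.tendsto l).comp hl
    have hev : ∀ᶠ n in atTop, f l - 1 < f (a (φ n) - c (φ n)) :=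
      hfl.eventually (eventually_gt_nhds (by linarith))
    obtain ⟨N, hN⟩ := hev.exists_forall_of_atTop
    obtain ⟨n, hn⟩ := exists_nat_gt (max (N : ℝ) (1 - f l))
    have hn1 : (N : ℝ) < n := lt_of_le_of_lt (le_max_left _ _) hn
    have hn2 : 1 - f l < n := lt_of_le_of_lt (le_max_right _ _) hn
    have hNn : N ≤ n := by exact_mod_cast hn1.le
    have h1 := hN n hNn
    have h2 := key (a (φ n)) (c (φ n)) (hcK (φ n))
    have h3 := hav (φ n)
    have h4 : (n : ℝ) ≤ (φ n : ℝ) := by exact_mod_cast hφ.le_apply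
    linarith
  refine ⟨hbdd, ?_⟩
  set m := sInf (f '' A) with hm
  have hne : (f '' A).Nonempty := hA.image f
  have hsel : ∀ n : ℕ, ∃ x ∈ A, f x < m + 1 / (n + 1) := by
    intro n
    have hpos : (0 : ℝ) < 1 / (n + 1) := by positivity
    obtain ⟨y, ⟨x, hxA, rfl⟩, hy⟩ := exists_lt_of_csInf_lt hne (by linarith : m < m + 1 / (n + 1))
    exact ⟨x, hxA, hy⟩
  choose a haA hav using hsel
  obtain ⟨c, hcK, φ, hφ, l, hlA, hl⟩ := hseq a haA
  have hfl : Tendsto (fun n => f (a (φ n) - c (φ n))) atTop (nhds (f l)) :=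
    (f.continuous.tendsto l).comp hl
  have hlim : Tendsto (fun n : ℕ => m + 1 / ((n : ℝ) + 1)) atTop (nhds m) := by
    have : Tendsto (fun n : ℕ => 1 / ((n : ℝ) + 1)) atTop (nhds 0) :=
      tendsto_one_div_add_atTop_nhds_zero_nat
    simpa using tendsto_const_nhds.add this
  have hle : f l ≤ m := by
    refine le_of_tendsto_of_tendsto' hfl hlim fun n => ?_
    have h2 := key (a (φ n)) (c (φ n)) (hcK (φ n))
    have h3 := hav (φ n)
    have h4 : (n : ℝ) ≤ (φ n : ℝ) := by exact_mod_cast hφ.le_apply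
    have h5 : 1 / ((φ n : ℝ) + 1) ≤ 1 / ((n : ℝ) + 1) := by
      apply one_div_le_one_div_of_le <;> linarith
    linarith
  exact ⟨l, hlA, fun b hbA =>
    hle.trans (csInf_le hbdd ⟨b, hbA, rfl⟩)⟩
end

section
/- Suppose int K ≠ ∅. If there exists x* ∈ K⁺ \ {0} such that x* attains a minimum on A, then A has a weak Pareto minimum with respect to K. Conversely, if A + K is convex (A is K-convex) and a ∈ A is a weak Pareto minimum of A, then there exists x* ∈ K⁺ \ {0} with x*(a) ≤ x*(b) for all b ∈ A. -/
/-!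
A nonzero functional `f ≥ 0` on `K` is positive on `int K`: a zero at an interior point would be a
local minimum of `f`, forcing `f = 0`. So if `f` is minimised on `A` at `a`, no `b ∈ A` has
`a - b ∈ int K`. Conversely, if `a` is a weak Pareto minimum then `a - int K`, the interior of
`a - K`, misses `A + K` because `K + int K ⊆ int K`. A Hahn–Banach functional `f` separating
`a - K` from `A + K` works: both sets contain `a`, so the separating level is `f a`.
-/

open Pointwise Set

theorem Convex.add_subset_self_of_smul_mem {𝕜 E : Type*} [Field 𝕜] [LinearOrder 𝕜]
    [IsStrictOrderedRing 𝕜] [AddCommGroup E] [Module 𝕜 E] {K : Set E} (hK : Convex 𝕜 K)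
    (hcone : ∀ t : 𝕜, 0 ≤ t → ∀ y ∈ K, t • y ∈ K) : K + K ⊆ K := by
  rintro _ ⟨x, hx, y, hy, rfl⟩
  have hmid : (2⁻¹ : 𝕜) • x + (2⁻¹ : 𝕜) • y ∈ K :=
    hK hx hy (by positivity) (by positivity) (by norm_num)
  simpa [smul_add, smul_smul] using hcone 2 zero_le_two _ hmid

theorem Set.add_interior_subset_interior {G : Type*} [TopologicalSpace G] [AddGroup G]
    [IsTopologicalAddGroup G] {K : Set G} (hK : K + K ⊆ K) : K + interior K ⊆ interior K :=
  interior_maximal ((add_subset_add_left interior_subset).trans hK) isOpen_interior.add_left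

theorem disjoint_vadd_neg_add_of_forall_sub_notMem {E : Type*} [AddCommGroup E]
    {A K C : Set E} {a : E} (hKC : K + C ⊆ C) (ha : ∀ b ∈ A, b - a ∉ -C) :
    Disjoint (a +ᵥ -C) (A + K) := by
  rw [disjoint_left]
  rintro _ ⟨c, hc, rfl⟩ ⟨b, hb, k, hk, hbk⟩
  refine ha b hb (mem_neg.2 ?_)
  have hsum : k + -c ∈ C := hKC ⟨k, hk, -c, hc, rfl⟩
  convert hsum using 1
  simp only [vadd_eq_add] at hbk
  rw [eq_add_neg_iff_add_eq, ← add_right_inj b, hbk]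
  abel

theorem interior_neg {G : Type*} [TopologicalSpace G] [InvolutiveNeg G] [ContinuousNeg G]
    (K : Set G) : interior (-K) = -interior K :=
  ((Homeomorph.neg G).preimage_interior K).symm

section

variable {X : Type*} [NormedAddCommGroup X] [NormedSpace ℝ X]

theorem ContinuousLinearMap.pos_of_nonneg_on_of_mem_interior {K : Set X} {f : X →L[ℝ] ℝ}
    (hf0 : f ≠ 0) (hfK : ∀ k ∈ K, 0 ≤ f k) {e : X} (he : e ∈ interior K) : 0 < f e := by
  refine (hfK e (interior_subset he)).lt_of_ne fun hfe => hf0 ?_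
  have hmin : IsLocalMin f e :=
    Filter.mem_of_superset (mem_interior_iff_mem_nhds.1 he) fun y hy => hfe ▸ hfK y hy
  exact hmin.hasFDerivAt_eq_zero f.hasFDerivAt

def IsWeakParetoMin (K A : Set X) (a : X) : Prop :=
  ∀ b ∈ A, b - a ∉ -interior K

theorem isWeakParetoMin_of_nonneg_of_isMinOn {K A : Set X} {f : X →L[ℝ] ℝ} {a : X}
    (hf0 : f ≠ 0) (hfK : ∀ k ∈ K, 0 ≤ f k) (hmin : IsMinOn f A a) :
    IsWeakParetoMin K A a := by
  intro b hb hba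
  have hpos := f.pos_of_nonneg_on_of_mem_interior hf0 hfK (neg_sub b a ▸ mem_neg.1 hba)
  rw [map_sub] at hpos
  linarith [isMinOn_iff.1 hmin b hb]

theorem IsWeakParetoMin.exists_nonneg_isMinOn {K A : Set X} {a : X} (hKconv : Convex ℝ K)
    (hK0 : (0 : X) ∈ K) (hKcone : ∀ t : ℝ, 0 ≤ t → ∀ y ∈ K, t • y ∈ K)
    (hint : (interior K).Nonempty) (hconv : Convex ℝ (A + K)) (haA : a ∈ A)
    (ha : IsWeakParetoMin K A a) :
    ∃ f : X →L[ℝ] ℝ, f ≠ 0 ∧ (∀ k ∈ K, 0 ≤ f k) ∧ IsMinOn f A a := by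
  have hinterior : interior (a +ᵥ -K) = a +ᵥ -interior K := by
    rw [interior_vadd, interior_neg]
  have hdisj : Disjoint (interior (a +ᵥ -K)) (A + K) := hinterior ▸
    disjoint_vadd_neg_add_of_forall_sub_notMem
      (add_interior_subset_interior (hKconv.add_subset_self_of_smul_mem hKcone)) ha
  have hsub_mem : ∀ k ∈ K, a - k ∈ a +ᵥ -K := fun k hk =>
    ⟨-k, neg_mem_neg.2 hk, (sub_eq_add_neg a k).symm⟩
  have hadd_mem : ∀ b ∈ A, b ∈ A + K := fun b hb => ⟨b, hb, 0, hK0, add_zero b⟩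
  obtain ⟨f, u, hf0, hfs, hft⟩ := geometric_hahn_banach_of_nonempty_interior
    (hKconv.neg.vadd a) hconv hdisj (hinterior ▸ hint.neg.vadd_set) ⟨a, hadd_mem a haA⟩
  have hau : f a ≤ u := by simpa using hfs (a - 0) (hsub_mem 0 hK0)
  have hua : u ≤ f a := hft a (hadd_mem a haA)
  refine ⟨f, hf0, fun k hk => ?_, isMinOn_iff.2 fun b hb => hau.trans (hft b (hadd_mem b hb))⟩
  have := hfs (a - k) (hsub_mem k hk)
  rw [map_sub] at this
  linarith

end

theorem pareto_scalarization_general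
    {X : Type*} [NormedAddCommGroup X] [NormedSpace ℝ X]
    (K : Set X) (hKconv : Convex ℝ K)
    (hK0 : (0 : X) ∈ K)
    (hKcone : ∀ t : ℝ, 0 ≤ t → ∀ y ∈ K, t • y ∈ K)
    (hint : (interior K).Nonempty)
    (A : Set X) :
    ((∃ f : X →L[ℝ] ℝ, f ≠ 0 ∧ (∀ k ∈ K, 0 ≤ f k) ∧
        ∃ a ∈ A, ∀ b ∈ A, f a ≤ f b) →
      ∃ a ∈ A, ∀ b ∈ A, b - a ∉ -interior K) ∧
    (Convex ℝ (A + K) →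
      ∀ a ∈ A, (∀ b ∈ A, b - a ∉ -interior K) →
        ∃ f : X →L[ℝ] ℝ, f ≠ 0 ∧ (∀ k ∈ K, 0 ≤ f k) ∧ ∀ b ∈ A, f a ≤ f b) :=
  ⟨fun ⟨_, hf0, hfK, a, haA, hmin⟩ =>
      ⟨a, haA, isWeakParetoMin_of_nonneg_of_isMinOn hf0 hfK (isMinOn_iff.2 hmin)⟩,
    fun hconv _ haA ha =>
      (IsWeakParetoMin.exists_nonneg_isMinOn hKconv hK0 hKcone hint hconv haA ha).imp
        fun _ ⟨hf0, hfK, hmin⟩ => ⟨hf0, hfK, isMinOn_iff.1 hmin⟩⟩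

/-- Existence of a minimizing nonzero positive functional yields a weak Pareto
minimum; conversely for K-convex `A`, a weak Pareto minimum is supported by a
nonzero positive functional. -/
theorem pareto_scalarization
    {X : Type*} [NormedAddCommGroup X] [NormedSpace ℝ X]
    (K : Set X) (hKcl : IsClosed K) (hKconv : Convex ℝ K)
    (hK0 : (0 : X) ∈ K)
    (hKcone : ∀ t : ℝ, 0 ≤ t → ∀ y ∈ K, t • y ∈ K)
    (hint : (interior K).Nonempty)
    (A : Set X) (hA : A.Nonempty) :
    ((∃ f : X →L[ℝ] ℝ, f ≠ 0 ∧ (∀ k ∈ K, 0 ≤ f k) ∧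
        ∃ a ∈ A, ∀ b ∈ A, f a ≤ f b) →
      ∃ a ∈ A, ∀ b ∈ A, b - a ∉ -interior K) ∧
    (Convex ℝ (A + K) →
      ∀ a ∈ A, (∀ b ∈ A, b - a ∉ -interior K) →
        ∃ f : X →L[ℝ] ℝ, f ≠ 0 ∧ (∀ k ∈ K, 0 ≤ f k) ∧ ∀ b ∈ A, f a ≤ f b) :=
  pareto_scalarization_general K hKconv hK0 hKcone hint A
end

section
/- If A ⊂ X is dually K-bounded but not K-bounded, and B ⊂ X is K-bounded, then the Hausdorff–Pompeiu distance h(Ã, B̃) is infinite. -/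
/-!
If `h(Ã, B̃)` were finite, `Ã` would lie in a thickening of `B̃`. Being `K`-bounded survives
adding `K`, taking convex hulls and closures, and thickening, so `B̃` and hence `Ã ⊇ A` would be
`K`-bounded.
-/

open Pointwise Metric

theorem Convex.add_subset_of_smul_mem {E : Type*} [AddCommGroup E] [Module ℝ E] {K : Set E}
    (hK : Convex ℝ K)
    (hKcone : ∀ t : ℝ, 0 ≤ t → ∀ y ∈ K, t • y ∈ K) : K + K ⊆ K := by
  rintro _ ⟨x, hx, y, hy, rfl⟩
  have hmid : (1 / 2 : ℝ) • x + (1 / 2 : ℝ) • y ∈ K :=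
    hK hx hy (by norm_num) (by norm_num) (by norm_num)
  convert hKcone 2 zero_le_two _ hmid using 1
  rw [smul_add, smul_smul, smul_smul]
  norm_num

section

variable {X : Type*} [SeminormedAddCommGroup X]

def IsConeBounded (K S : Set X) : Prop :=
  ∃ ℓ : ℝ, 0 ≤ ℓ ∧ S ⊆ closedBall (0 : X) ℓ + K

namespace IsConeBounded

variable {K S T : Set X}

theorem mono (hT : IsConeBounded K T) (hST : S ⊆ T) : IsConeBounded K S :=
  let ⟨ℓ, hℓ, hTℓ⟩ := hT
  ⟨ℓ, hℓ, hST.trans hTℓ⟩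

theorem add_cone (hS : IsConeBounded K S) (hKK : K + K ⊆ K) : IsConeBounded K (S + K) := by
  obtain ⟨ℓ, hℓ, hSℓ⟩ := hS
  refine ⟨ℓ, hℓ, ?_⟩
  calc S + K ⊆ closedBall 0 ℓ + K + K := Set.add_subset_add_right hSℓ
    _ ⊆ closedBall 0 ℓ + K := by
      rw [add_assoc]
      exact Set.add_subset_add_left hKK

variable [NormedSpace ℝ X]

theorem convexHull (hK : Convex ℝ K) (hS : IsConeBounded K S) :
    IsConeBounded K (convexHull ℝ S) := by
  obtain ⟨ℓ, hℓ, hSℓ⟩ := hS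
  exact ⟨ℓ, hℓ, convexHull_min hSℓ ((convex_closedBall 0 ℓ).add hK)⟩

theorem thickening (hS : IsConeBounded K S) (δ : ℝ) :
    IsConeBounded K (thickening δ S) := by
  obtain hδ | hδ := le_or_gt δ 0
  · rw [thickening_of_nonpos hδ]
    exact ⟨0, le_rfl, Set.empty_subset _⟩
  obtain ⟨ℓ, hℓ, hSℓ⟩ := hS
  refine ⟨ℓ + δ, by positivity, ?_⟩
  calc Metric.thickening δ S = S + ball 0 δ := (add_ball_zero δ S).symm
    _ ⊆ closedBall 0 ℓ + K + ball 0 δ := Set.add_subset_add_right hSℓ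
    _ = ball 0 (ℓ + δ) + K := by rw [add_right_comm, closedBall_add_ball hℓ hδ, add_zero]
    _ ⊆ closedBall 0 (ℓ + δ) + K := Set.add_subset_add_right ball_subset_closedBall

theorem closure (hS : IsConeBounded K S) : IsConeBounded K (closure S) :=
  (hS.thickening 1).mono (closure_subset_thickening one_pos S)

theorem hausdorffEDist_eq_top (hS : ¬ IsConeBounded K S) (hT : IsConeBounded K T) :
    hausdorffEDist S T = ⊤ := by
  by_contra hfin
  set r := (hausdorffEDist S T).toReal + 1
  refine hS ((hT.thickening r).mono fun x hx => mem_thickening_iff_infEDist_lt.2 ?_)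
  calc infEDist x T ≤ hausdorffEDist S T := infEDist_le_hausdorffEDist_of_mem hx
    _ < ENNReal.ofReal r := by
      rw [← ENNReal.ofReal_toReal hfin]
      exact ENNReal.ofReal_lt_ofReal_iff'.2 ⟨lt_add_one _, by positivity⟩

end IsConeBounded

end

theorem hausdorff_dist_infinite_general
    {X : Type*} [NormedAddCommGroup X] [NormedSpace ℝ X]
    (K : Set X) (hKconv : Convex ℝ K)
    (hK0 : (0 : X) ∈ K)
    (hKcone : ∀ t : ℝ, 0 ≤ t → ∀ y ∈ K, t • y ∈ K)
    (A B : Set X)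
    (hnbA : ¬ ∃ ℓ : ℝ, 0 ≤ ℓ ∧ A ⊆ Metric.closedBall (0 : X) ℓ + K)
    (hbB : ∃ ℓ : ℝ, 0 ≤ ℓ ∧ B ⊆ Metric.closedBall (0 : X) ℓ + K) :
    EMetric.hausdorffEdist (closure (convexHull ℝ (A + K)))
      (closure (convexHull ℝ (B + K))) = ⊤ := by
  have hA : ¬ IsConeBounded K (closure (convexHull ℝ (A + K))) := fun h =>
    hnbA (h.mono ((Set.subset_add_left A hK0).trans
      ((subset_convexHull ℝ _).trans subset_closure)))
  have hBK : IsConeBounded K (B + K) :=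
    IsConeBounded.add_cone hbB (hKconv.add_subset_of_smul_mem hKcone)
  have hB : IsConeBounded K (closure (convexHull ℝ (B + K))) := (hBK.convexHull hKconv).closure
  exact IsConeBounded.hausdorffEDist_eq_top hA hB

/-- If `A` is dually K-bounded but not K-bounded and `B` is K-bounded,
then `h(Ã, B̃) = ∞`. -/
theorem hausdorff_dist_infinite
    {X : Type*} [NormedAddCommGroup X] [NormedSpace ℝ X]
    (K : Set X) (hKcl : IsClosed K) (hKconv : Convex ℝ K)
    (hK0 : (0 : X) ∈ K)
    (hKcone : ∀ t : ℝ, 0 ≤ t → ∀ y ∈ K, t • y ∈ K)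
    (A B : Set X) (hA : A.Nonempty) (hB : B.Nonempty)
    (hdbA : ∀ f : X →L[ℝ] ℝ, (∀ k ∈ K, 0 ≤ f k) → BddBelow (f '' A))
    (hnbA : ¬ ∃ ℓ : ℝ, 0 ≤ ℓ ∧ A ⊆ Metric.closedBall (0 : X) ℓ + K)
    (hbB : ∃ ℓ : ℝ, 0 ≤ ℓ ∧ B ⊆ Metric.closedBall (0 : X) ℓ + K) :
    EMetric.hausdorffEdist (closure (convexHull ℝ (A + K)))
      (closure (convexHull ℝ (B + K))) = ⊤ :=
  hausdorff_dist_infinite_general K hKconv hK0 hKcone A B hnbA hbB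
end

section
/- The ordering cone 𝒦 = {⟨Ã,B̃⟩ ∣ Ã ⊂ B̃} of the Rådström space of dually K-bounded sets is closed in the locally convex topology generated by the seminorms p_{x*}(⟨Ã,B̃⟩) = |inf x*(Ã) − inf x*(B̃)|, x* ∈ K⁺. Concretely: if for every x* ∈ K⁺ and every ε > 0 there exist dually K-bounded sets C, D with |inf x*(C̃) − inf x*(D̃)| < ε and cl(Ã + C̃) ⊂ cl(B̃ + D̃), then Ã ⊂ B̃. -/
open Pointwise

/- Separate a point `x ∈ Ã \ B̃` from `B̃` by a functional `f` with `f x < u < f` on `B̃`;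
since `B̃` is stable under adding `K`, `f` lies in `K⁺`. Every `z ∈ C̃` gives
`x + z ∈ cl(B̃ + D̃)`, on which `f ≥ u + inf f(D̃)`, so `inf f(C̃) - inf f(D̃) ≥ u - f x`,
contradicting the hypothesis at `ε = u - f x`. -/

section

variable {E : Type*} [AddCommGroup E] [Module ℝ E]

theorem nonneg_of_forall_lt_apply_add_smul {f : E →ₗ[ℝ] ℝ} {u : ℝ} {b k : E}
    (h : ∀ t : ℝ, 0 ≤ t → u < f (b + t • k)) : 0 ≤ f k := by
  by_contra! hk
  have hb : u < f b := by simpa using h 0 le_rfl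
  have ht : 0 ≤ (u - f b) / f k := (div_pos_of_neg_of_neg (by linarith) hk).le
  have := h _ ht
  rw [map_add, map_smul, smul_eq_mul, div_mul_cancel₀ _ hk.ne] at this
  linarith

variable [TopologicalSpace E]

theorem lowerBounds_image_subset_closure_convexHull_add {K S : Set E} {f : E →L[ℝ] ℝ}
    (hf : ∀ k ∈ K, 0 ≤ f k) :
    lowerBounds (f '' S) ⊆ lowerBounds (f '' closure (convexHull ℝ (S + K))) := by
  intro m hm
  have hS : S + K ⊆ {x | m ≤ f x} := by
    rintro _ ⟨s, hs, k, hk, rfl⟩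
    have := hm ⟨s, hs, rfl⟩
    simp only [Set.mem_ofPred_eq, map_add]
    linarith [hf k hk]
  rintro _ ⟨x, hx, rfl⟩
  exact closure_minimal (convexHull_min hS (convex_halfSpace_ge f.isLinear m))
    (isClosed_le continuous_const f.continuous) hx

theorem add_mem_lowerBounds_image_closure_add {T U : Set E} {f : E →L[ℝ] ℝ} {a b : ℝ}
    (ha : a ∈ lowerBounds (f '' T)) (hb : b ∈ lowerBounds (f '' U)) :
    a + b ∈ lowerBounds (f '' closure (T + U)) := by
  have hTU : T + U ⊆ {z | a + b ≤ f z} := by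
    rintro _ ⟨y, hy, z, hz, rfl⟩
    simp only [Set.mem_ofPred_eq, map_add]
    exact add_le_add (ha ⟨y, hy, rfl⟩) (hb ⟨z, hz, rfl⟩)
  rintro _ ⟨z, hz, rfl⟩
  exact closure_minimal hTU (isClosed_le continuous_const f.continuous) hz

end

theorem ordering_cone_closed_general
    {X : Type*} [NormedAddCommGroup X] [NormedSpace ℝ X]
    (K : Set X)
    (hK0 : (0 : X) ∈ K)
    (hKcone : ∀ t : ℝ, 0 ≤ t → ∀ y ∈ K, t • y ∈ K)
    (A B : Set X) (hB : B.Nonempty)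
    (hcl : ∀ f : X →L[ℝ] ℝ, (∀ k ∈ K, 0 ≤ f k) → ∀ ε : ℝ, 0 < ε →
      ∃ C D : Set X, C.Nonempty ∧ D.Nonempty ∧
        (∀ g : X →L[ℝ] ℝ, (∀ k ∈ K, 0 ≤ g k) → BddBelow (g '' C)) ∧
        (∀ g : X →L[ℝ] ℝ, (∀ k ∈ K, 0 ≤ g k) → BddBelow (g '' D)) ∧
        |sInf (f '' closure (convexHull ℝ (C + K))) -
          sInf (f '' closure (convexHull ℝ (D + K)))| < ε ∧
        closure (closure (convexHull ℝ (A + K)) + closure (convexHull ℝ (C + K))) ⊆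
          closure (closure (convexHull ℝ (B + K)) + closure (convexHull ℝ (D + K)))) :
    closure (convexHull ℝ (A + K)) ⊆ closure (convexHull ℝ (B + K)) := by
  intro x hx
  by_contra hxB
  obtain ⟨f, u, hfx, hfB⟩ :=
    geometric_hahn_banach_point_closed (convex_convexHull ℝ _).closure isClosed_closure hxB
  obtain ⟨b, hb⟩ := hB
  have hfK : ∀ k ∈ K, 0 ≤ f k := fun k hk =>
    nonneg_of_forall_lt_apply_add_smul (f := f.toLinearMap) fun t ht =>
      hfB _ (subset_closure (subset_convexHull ℝ _ (Set.add_mem_add hb (hKcone t ht k hk))))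
  obtain ⟨C, D, ⟨c, hc⟩, -, -, hDbdd, hCD, hsub⟩ := hcl f hfK (u - f x) (by linarith)
  set C' := closure (convexHull ℝ (C + K))
  set D' := closure (convexHull ℝ (D + K))
  have hD' : BddBelow (f '' D') :=
    Set.Nonempty.mono (lowerBounds_image_subset_closure_convexHull_add hfK) (hDbdd f hfK)
  have hBD :
      u + sInf (f '' D') ∈ lowerBounds (f '' closure (closure (convexHull ℝ (B + K)) + D')) :=
    add_mem_lowerBounds_image_closure_add (by rintro _ ⟨y, hy, rfl⟩; exact (hfB y hy).le)
      fun _ hz => csInf_le hD' hz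
  have hC' : u + sInf (f '' D') - f x ≤ sInf (f '' C') := by
    have hcC' : c + 0 ∈ C' := subset_closure (subset_convexHull ℝ _ (Set.add_mem_add hc hK0))
    refine le_csInf ⟨_, c + 0, hcC', rfl⟩ ?_
    rintro _ ⟨z, hz, rfl⟩
    have := hBD ⟨x + z, hsub (subset_closure (Set.add_mem_add hx hz)), rfl⟩
    rw [map_add] at this
    linarith
  linarith [(abs_lt.mp hCD).2]

/-- Closedness of the ordering cone of the Rådström space of dually K-bounded sets
in the seminorm topology: if for every `x* ∈ K⁺` and `ε > 0` there are dually
K-bounded `C, D` with `|inf x*(C̃) - inf x*(D̃)| < ε` and `cl(Ã + C̃) ⊆ cl(B̃ + D̃)`,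
then `Ã ⊆ B̃`. -/
theorem ordering_cone_closed
    {X : Type*} [NormedAddCommGroup X] [NormedSpace ℝ X]
    (K : Set X) (hKcl : IsClosed K) (hKconv : Convex ℝ K)
    (hK0 : (0 : X) ∈ K)
    (hKcone : ∀ t : ℝ, 0 ≤ t → ∀ y ∈ K, t • y ∈ K)
    (A B : Set X) (hA : A.Nonempty) (hB : B.Nonempty)
    (hdbA : ∀ f : X →L[ℝ] ℝ, (∀ k ∈ K, 0 ≤ f k) → BddBelow (f '' A))
    (hdbB : ∀ f : X →L[ℝ] ℝ, (∀ k ∈ K, 0 ≤ f k) → BddBelow (f '' B))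
    (hcl : ∀ f : X →L[ℝ] ℝ, (∀ k ∈ K, 0 ≤ f k) → ∀ ε : ℝ, 0 < ε →
      ∃ C D : Set X, C.Nonempty ∧ D.Nonempty ∧
        (∀ g : X →L[ℝ] ℝ, (∀ k ∈ K, 0 ≤ g k) → BddBelow (g '' C)) ∧
        (∀ g : X →L[ℝ] ℝ, (∀ k ∈ K, 0 ≤ g k) → BddBelow (g '' D)) ∧
        |sInf (f '' closure (convexHull ℝ (C + K))) -
          sInf (f '' closure (convexHull ℝ (D + K)))| < ε ∧
        closure (closure (convexHull ℝ (A + K)) + closure (convexHull ℝ (C + K))) ⊆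
          closure (closure (convexHull ℝ (B + K)) + closure (convexHull ℝ (D + K)))) :
    closure (convexHull ℝ (A + K)) ⊆ closure (convexHull ℝ (B + K)) :=
  ordering_cone_closed_general K hK0 hKcone A B hB hcl
end
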